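/- arXiv:1804.09854 — 8 statements merged into one kernel-verified Lean document; each statement's English description precedes it below -/
import Mathlib

section
/- Let 𝔪 = ⊕_{p<0}𝔤_p be an FGLA over ℝ with 𝔤_{-2} ≠ 0, g a nondegenerate symmetric bilinear form on 𝔤_{-1}, 𝔤₀ the Lie algebra of all derivations D of 𝔪 with D(𝔤_p) ⊆ 𝔤_p for all p < 0 and D|𝔤_{-1} ∈ co(𝔤_{-1},g), and ĝ₀ = {D ∈ 𝔤₀ : D|𝔤_{-1} ∈ so(𝔤_{-1},g)}. Let E be the derivation of 𝔪 determined by E(X) = pX for X ∈ 𝔤_p (p < 0). Then E ∈ 𝔤₀, E ∉ ĝ₀, and 𝔤₀ = ℝE ⊕ ĝ₀; i.e., every D ∈ 𝔤₀ is uniquely of the form D = cE + D̂ with c ∈ ℝ and D̂ ∈ ĝ₀. -/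
open scoped TensorProduct

section ConformalSubriemannianDefs

variable {L : Type*} [LieRing L] [LieAlgebra ℝ L]

/-- `g` is a ℤ-grading of the Lie algebra `L`: `L` is the internal direct sum of the
subspaces `g p` and `⁅g p, g q⁆ ⊆ g (p + q)`. -/
def IsGLA (g : ℤ → Submodule ℝ L) : Prop :=
  DirectSum.IsInternal g ∧ ∀ p q : ℤ, ∀ x ∈ g p, ∀ y ∈ g q, ⁅x, y⁆ ∈ g (p + q)

/-- Transitivity of a graded Lie algebra. -/
def IsTransitiveGLA (g : ℤ → Submodule ℝ L) : Prop :=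
  ∀ p : ℤ, 0 ≤ p → ∀ x ∈ g p, (∀ y ∈ g (-1), ⁅x, y⁆ = 0) → x = 0

/-- The negative part of the grading is fundamental: `g (-1)` is nonzero and generates
the whole negative part. -/
def IsFundamental (g : ℤ → Submodule ℝ L) : Prop :=
  g (-1) ≠ ⊥ ∧
  ∀ p : ℤ, p < 0 → (g p : Set L) ⊆ ↑(LieSubalgebra.lieSpan ℝ L ↑(g (-1)))

/-- `g` makes `L` itself a fundamental graded Lie algebra (FGLA): all nonnegative pieces
vanish, `g (-1)` is nonzero and generates `L`. -/
def IsFGLA (g : ℤ → Submodule ℝ L) : Prop :=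
  IsGLA g ∧ (∀ p : ℤ, 0 ≤ p → g p = ⊥) ∧ g (-1) ≠ ⊥ ∧
  LieSubalgebra.lieSpan ℝ L ↑(g (-1)) = ⊤

/-- The bilinear form `B` is symmetric on the subspace `W`. -/
def SymmOn (B : L →ₗ[ℝ] L →ₗ[ℝ] ℝ) (W : Submodule ℝ L) : Prop :=
  ∀ x ∈ W, ∀ y ∈ W, B x y = B y x

/-- The bilinear form `B` is nondegenerate on the subspace `W`. -/
def NondegOn (B : L →ₗ[ℝ] L →ₗ[ℝ] ℝ) (W : Submodule ℝ L) : Prop :=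
  ∀ x ∈ W, (∀ y ∈ W, B x y = 0) → x = 0

/-- The endomorphism `D` restricted to `W` lies in `co(W, B)`. -/
def CoOn (B : L →ₗ[ℝ] L →ₗ[ℝ] ℝ) (W : Submodule ℝ L) (D : L →ₗ[ℝ] L) : Prop :=
  ∃ η : ℝ, ∀ x ∈ W, ∀ y ∈ W, B (D x) y + B x (D y) = η * B x y

/-- The endomorphism `D` restricted to `W` lies in `so(W, B)`. -/
def SoOn (B : L →ₗ[ℝ] L →ₗ[ℝ] ℝ) (W : Submodule ℝ L) (D : L →ₗ[ℝ] L) : Prop :=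
  ∀ x ∈ W, ∀ y ∈ W, B (D x) y + B x (D y) = 0

/-- `D` is a derivation of the Lie algebra `L`. -/
def IsLieDeriv (D : L →ₗ[ℝ] L) : Prop :=
  ∀ x y : L, D ⁅x, y⁆ = ⁅D x, y⁆ + ⁅x, D y⁆

/-- The bilinear form `B` has signature `(r, s)` on the subspace `W`. -/
def HasSignatureOn (B : L →ₗ[ℝ] L →ₗ[ℝ] ℝ) (W : Submodule ℝ L) (r s : ℕ) : Prop :=
  ∃ P N : Submodule ℝ L, P ⊓ N = ⊥ ∧ P ⊔ N = W ∧
    Module.finrank ℝ P = r ∧ Module.finrank ℝ N = s ∧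
    (∀ x ∈ P, ∀ y ∈ N, B x y = 0) ∧
    (∀ x ∈ P, x ≠ 0 → 0 < B x x) ∧ (∀ x ∈ N, x ≠ 0 → B x x < 0)

end ConformalSubriemannianDefs

/-!
On `𝔤₋₁` the grading derivation `E` is `-id`, so `E ∈ co(𝔤₋₁, g)` with conformal factor `-2`.
Nondegeneracy of `g` on the nonzero space `𝔤₋₁` makes the conformal factor of an element of
`co(𝔤₋₁, g)` unique, and it depends linearly on the endomorphism. Hence `E ∉ so(𝔤₋₁, g)`,
and a derivation `D ∈ 𝔤₀` with conformal factor `η` splits uniquely as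
`D = (-η/2) • E + (D - (-η/2) • E)`, the second summand lying in `ĝ₀`.
-/

section GradingDerivation

variable {L : Type*} [LieRing L] [LieAlgebra ℝ L] {g : ℤ → Submodule ℝ L}

theorem IsLieDeriv.smul {D : L →ₗ[ℝ] L} (hD : IsLieDeriv D) (t : ℝ) : IsLieDeriv (t • D) := by
  intro x y
  simp only [LinearMap.smul_apply, hD x y, smul_add, smul_lie, lie_smul]

theorem IsLieDeriv.sub {D D' : L →ₗ[ℝ] L} (hD : IsLieDeriv D) (hD' : IsLieDeriv D') :
    IsLieDeriv (D - D') := by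
  intro x y
  simp only [LinearMap.sub_apply, hD x y, hD' x y, sub_lie, lie_sub]
  abel

theorem IsGLA.isLieDeriv_of_eq_smul (hg : IsGLA g) {E : L →ₗ[ℝ] L}
    (hE : ∀ p : ℤ, ∀ x ∈ g p, E x = (p : ℝ) • x) : IsLieDeriv E := by
  have hmem (z : L) : z ∈ ⨆ p, g p := hg.1.submodule_iSup_eq_top ▸ Submodule.mem_top
  intro x y
  have hx := hmem x
  have hy := hmem y
  induction hx using Submodule.iSup_induction' with
  | mem p x hx =>
    induction hy using Submodule.iSup_induction' with
    | mem q y hy =>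
      rw [hE p x hx, hE q y hy, hE (p + q) _ (hg.2 p q x hx y hy), smul_lie, lie_smul,
        Int.cast_add, add_smul]
    | zero => simp
    | add y y' _ _ hy hy' =>
      simp only [lie_add, map_add, hy, hy']
      abel
  | zero => simp
  | add x x' _ _ hx hx' =>
    simp only [add_lie, map_add, hx, hx']
    abel

theorem IsFGLA.eq_smul_of_forall_neg (hg : IsFGLA g) {E : L →ₗ[ℝ] L}
    (hE : ∀ p : ℤ, p < 0 → ∀ x ∈ g p, E x = (p : ℝ) • x) :
    ∀ p : ℤ, ∀ x ∈ g p, E x = (p : ℝ) • x := by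
  intro p x hx
  rcases lt_or_ge p 0 with hp | hp
  · exact hE p hp x hx
  · rw [hg.2.1 p hp, Submodule.mem_bot] at hx
    simp [hx]

end GradingDerivation

section ConformalFactor

variable {L : Type*} [LieRing L] [LieAlgebra ℝ L]
  {B : L →ₗ[ℝ] L →ₗ[ℝ] ℝ} {W : Submodule ℝ L} {D E : L →ₗ[ℝ] L} {η ε : ℝ}

def HasConformalFactor (B : L →ₗ[ℝ] L →ₗ[ℝ] ℝ) (W : Submodule ℝ L) (D : L →ₗ[ℝ] L) (η : ℝ) :
    Prop :=
  ∀ x ∈ W, ∀ y ∈ W, B (D x) y + B x (D y) = η * B x y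

theorem soOn_iff_hasConformalFactor_zero : SoOn B W D ↔ HasConformalFactor B W D 0 := by
  simp only [SoOn, HasConformalFactor, zero_mul]

theorem HasConformalFactor.unique (hW : W ≠ ⊥) (hB : NondegOn B W)
    (h : HasConformalFactor B W D η) (h' : HasConformalFactor B W D ε) : η = ε := by
  obtain ⟨x, hx, hx0⟩ := Submodule.exists_mem_ne_zero_of_ne_bot hW
  obtain ⟨y, hy, hxy⟩ : ∃ y ∈ W, B x y ≠ 0 := by
    by_contra! hcon
    exact hx0 (hB x hx hcon)
  have hmul : (η - ε) * B x y = 0 := by linear_combination h' x hx y hy - h x hx y hy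
  exact sub_eq_zero.mp ((mul_eq_zero.mp hmul).resolve_right hxy)

theorem hasConformalFactor_of_eq_smul {c : ℝ} (hE : ∀ x ∈ W, E x = c • x) :
    HasConformalFactor B W E (2 * c) := by
  intro x hx y hy
  simp only [hE x hx, hE y hy, map_smul, LinearMap.smul_apply, smul_eq_mul]
  ring

theorem HasConformalFactor.smul (h : HasConformalFactor B W D η) (t : ℝ) :
    HasConformalFactor B W (t • D) (t * η) := by
  intro x hx y hy
  simp only [LinearMap.smul_apply, map_smul, smul_eq_mul]
  linear_combination t * h x hx y hy

theorem HasConformalFactor.sub (h : HasConformalFactor B W D η)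
    (h' : HasConformalFactor B W E ε) : HasConformalFactor B W (D - E) (η - ε) := by
  intro x hx y hy
  simp only [LinearMap.sub_apply, map_sub]
  linear_combination h x hx y hy - h' x hx y hy

end ConformalFactor

theorem g0_eq_span_E_sup_hatG0_general
    {M : Type*} [LieRing M] [LieAlgebra ℝ M]
    (g : ℤ → Submodule ℝ M) (hFGLA : IsFGLA g)
    (B : M →ₗ[ℝ] M →ₗ[ℝ] ℝ) (hBnd : NondegOn B (g (-1)))
    (E : M →ₗ[ℝ] M)
    (hE : ∀ p : ℤ, p < 0 → ∀ x ∈ g p, E x = (p : ℝ) • x) :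
    (IsLieDeriv E ∧ (∀ p : ℤ, p < 0 → ∀ x ∈ g p, E x ∈ g p) ∧ CoOn B (g (-1)) E) ∧
    ¬ SoOn B (g (-1)) E ∧
    ∀ D : M →ₗ[ℝ] M,
      (IsLieDeriv D ∧ (∀ p : ℤ, p < 0 → ∀ x ∈ g p, D x ∈ g p) ∧ CoOn B (g (-1)) D) →
      ∃! cD : ℝ × (M →ₗ[ℝ] M),
        (IsLieDeriv cD.2 ∧ (∀ p : ℤ, p < 0 → ∀ x ∈ g p, cD.2 x ∈ g p) ∧
          SoOn B (g (-1)) cD.2) ∧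
        D = cD.1 • E + cD.2 := by
  have hne : g (-1) ≠ ⊥ := hFGLA.2.2.1
  have hEder : IsLieDeriv E := hFGLA.1.isLieDeriv_of_eq_smul (hFGLA.eq_smul_of_forall_neg hE)
  have hEg (p : ℤ) (hp : p < 0) (x : M) (hx : x ∈ g p) : E x ∈ g p :=
    hE p hp x hx ▸ Submodule.smul_mem _ _ hx
  have hEco : HasConformalFactor B (g (-1)) E (2 * -1) :=
    hasConformalFactor_of_eq_smul fun x hx => by simpa using hE (-1) (by norm_num) x hx
  refine ⟨⟨hEder, hEg, _, hEco⟩, fun hso => ?_, ?_⟩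
  · have hfactor := hEco.unique hne hBnd (soOn_iff_hasConformalFactor_zero.mp hso)
    norm_num at hfactor
  rintro D ⟨hDder, hDg, hDco⟩
  obtain ⟨η, hη⟩ : ∃ η, HasConformalFactor B (g (-1)) D η := hDco
  refine ⟨(-η / 2, D - (-η / 2) • E), ⟨⟨hDder.sub (hEder.smul _),
    fun p hp x hx => Submodule.sub_mem _ (hDg p hp x hx) (Submodule.smul_mem _ _ (hEg p hp x hx)),
    soOn_iff_hasConformalFactor_zero.mpr ?_⟩, by module⟩, ?_⟩
  · convert hη.sub (hEco.smul (-η / 2)) using 1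
    ring
  rintro ⟨t, D'⟩ ⟨⟨-, -, hso⟩, rfl⟩
  dsimp only at hη hso ⊢
  have hD'co := hη.sub (hEco.smul t)
  rw [add_sub_cancel_left] at hD'co
  have ht : t = -η / 2 := by
    linarith [hD'co.unique hne hBnd (soOn_iff_hasConformalFactor_zero.mp hso)]
  subst ht
  rw [add_sub_cancel_left]

/-- For an FGLA `𝔪` with `𝔤₋₂ ≠ 0` and a nondegenerate symmetric bilinear
form `g` on `𝔤₋₁`, the grading derivation `E` (with `E X = p • X` for `X ∈ 𝔤_p`) belongs to
`𝔤₀`, does not belong to `ĝ₀`, and `𝔤₀ = ℝE ⊕ ĝ₀`: every `D ∈ 𝔤₀` is uniquely of the form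
`D = c • E + D̂` with `c ∈ ℝ` and `D̂ ∈ ĝ₀`. -/
theorem g0_eq_span_E_sup_hatG0
    {M : Type*} [LieRing M] [LieAlgebra ℝ M] [FiniteDimensional ℝ M]
    (g : ℤ → Submodule ℝ M) (hFGLA : IsFGLA g) (hg2 : g (-2) ≠ ⊥)
    (B : M →ₗ[ℝ] M →ₗ[ℝ] ℝ) (hBsymm : SymmOn B (g (-1))) (hBnd : NondegOn B (g (-1)))
    (E : M →ₗ[ℝ] M)
    (hE : ∀ p : ℤ, p < 0 → ∀ x ∈ g p, E x = (p : ℝ) • x) :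
    (IsLieDeriv E ∧ (∀ p : ℤ, p < 0 → ∀ x ∈ g p, E x ∈ g p) ∧ CoOn B (g (-1)) E) ∧
    ¬ SoOn B (g (-1)) E ∧
    ∀ D : M →ₗ[ℝ] M,
      (IsLieDeriv D ∧ (∀ p : ℤ, p < 0 → ∀ x ∈ g p, D x ∈ g p) ∧ CoOn B (g (-1)) D) →
      ∃! cD : ℝ × (M →ₗ[ℝ] M),
        (IsLieDeriv cD.2 ∧ (∀ p : ℤ, p < 0 → ∀ x ∈ g p, cD.2 x ∈ g p) ∧
          SoOn B (g (-1)) cD.2) ∧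
        D = cD.1 • E + cD.2 :=
  g0_eq_span_E_sup_hatG0_general g hFGLA B hBnd E hE
end

section
/- Let 𝔪 = ⊕_{p<0}𝔤_p be an FGLA over ℝ with 𝔤_{-2} ≠ 0 and dim 𝔤_{-1} = 2, and let g be a nondegenerate symmetric bilinear form on 𝔤_{-1}. Let D be a derivation of 𝔪 such that D(𝔤_p) ⊆ 𝔤_p for all p < 0, D|𝔤_{-1} ∈ co(𝔤_{-1},g), and D vanishes on 𝔤_p for every p ≤ −2. Then D|𝔤_{-1} ∈ so(𝔤_{-1},g); that is, the conformal factor of D|𝔤_{-1} is zero. -/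
open scoped TensorProduct

/-!
Write `W = 𝔤₋₁` and `A = D|W`. Since `D` is a derivation and `dim W = 2`, the identity
`D⁅x, y⁆ = ⁅A x, y⁆ + ⁅x, A y⁆ = (tr A) • ⁅x, y⁆` holds on `W`. As `𝔤₋₂ ≠ 0`, `W` is not abelian,
and `D` kills `⁅W, W⁆ ⊆ 𝔤₋₂`, so `tr A = 0`. On the other hand, pairing the conformal identity
`g(A x, y) + g(x, A y) = η g(x, y)` over a basis and its `g`-dual basis gives `η dim W = 2 tr A`.
Hence `η = 0`.
-/

open LinearMap (trace)

namespace LinearMap.BilinForm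

variable {K V ι : Type*} [Field K] [AddCommGroup V] [Module K V] {B : LinearMap.BilinForm K V}

theorem trace_eq_sum_apply_dualBasis [Fintype ι] [DecidableEq ι] (hB : B.Nondegenerate)
    (b : Module.Basis ι K V) (A : Module.End K V) :
    trace K V A = ∑ i, B (A (B.dualBasis hB b i)) (b i) := by
  simp [trace_eq_matrix_trace K (B.dualBasis hB b), Matrix.trace, LinearMap.toMatrix_apply]

theorem mul_finrank_eq_two_mul_trace [FiniteDimensional K V] (hB : B.Nondegenerate)
    (hBs : B.IsSymm) {A : Module.End K V} {η : K}
    (hA : ∀ x y, B (A x) y + B x (A y) = η * B x y) :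
    η * Module.finrank K V = 2 * trace K V A := by
  let b := Module.finBasis K V
  let b' := B.dualBasis hB b
  have h₁ : trace K V A = ∑ i, B (A (b i)) (b' i) := by
    simpa [b', dualBasis_dualBasis hB hBs] using trace_eq_sum_apply_dualBasis hB b' A
  have h₂ : trace K V A = ∑ i, B (b i) (A (b' i)) := by
    simpa [b', hBs.eq (b _)] using trace_eq_sum_apply_dualBasis hB b A
  have h₃ : ∑ i, η * B (b i) (b' i) = η * Module.finrank K V := by
    simp [b', apply_dualBasis_right hB hBs, mul_comm]
  calc η * Module.finrank K V = ∑ i, (B (A (b i)) (b' i) + B (b i) (A (b' i))) := by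
        simp only [hA, h₃]
    _ = 2 * trace K V A := by rw [Finset.sum_add_distrib, ← h₁, ← h₂, two_mul]

end LinearMap.BilinForm

theorem LinearMap.IsAlt.apply_add_apply_eq_trace_smul {K V N : Type*} [Field K]
    [AddCommGroup V] [Module K V] [AddCommGroup N] [Module K N]
    {ω : V →ₗ[K] V →ₗ[K] N} (hω : ω.IsAlt) (hV : Module.finrank K V = 2)
    (A : Module.End K V) (x y : V) :
    ω (A x) y + ω x (A y) = trace K V A • ω x y := by
  have : Module.Finite K V := Module.finite_of_finrank_eq_succ hV
  let b := Module.finBasisOfFinrankEq K V hV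
  set M := LinearMap.toMatrix b b A
  have hA (j : Fin 2) : A (b j) = M 0 j • b 0 + M 1 j • b 1 := by
    rw [← Fin.sum_univ_two (fun i => M i j • b i)]
    simp [M, LinearMap.toMatrix_apply]
  have htr : trace K V A = M 0 0 + M 1 1 := by
    rw [LinearMap.trace_eq_matrix_trace K b, Matrix.trace_fin_two]
  have hskew : ω (b 1) (b 0) = -ω (b 0) (b 1) := (hω.neg _ _).symm
  suffices ω.compl₁₂ A LinearMap.id + ω.compl₂ A = trace K V A • ω by
    simpa using LinearMap.congr_fun₂ this x y
  refine LinearMap.ext_basis b b fun i j => ?_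
  fin_cases i <;> fin_cases j <;>
    simp only [Fin.zero_eta, Fin.mk_one, Fin.isValue, add_apply, compl₁₂_apply, compl₂_apply,
      hA, map_add, map_smul, id_coe, id_eq, smul_apply, hω.self_eq_zero, hskew, smul_zero,
      smul_neg, zero_add, add_zero, htr] <;>
    module

section GradedLieAlgebra

variable {L : Type*} [LieRing L] [LieAlgebra ℝ L] {g : ℤ → Submodule ℝ L}

theorem IsFGLA.exists_lie_ne_zero (hg : IsFGLA g) {p : ℤ} (hp : p ≠ -1) (hgp : g p ≠ ⊥) :
    ∃ x ∈ g (-1), ∃ y ∈ g (-1), ⁅x, y⁆ ≠ 0 := by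
  by_contra! habel
  have hspan (x : L) (hx : x ∈ LieSubalgebra.lieSpan ℝ L (g (-1))) : x ∈ g (-1) := by
    induction hx using LieSubalgebra.lieSpan_induction with
    | mem x hx => exact hx
    | zero => exact zero_mem _
    | add _ _ _ _ hx hy => exact add_mem hx hy
    | smul a _ _ hx => exact Submodule.smul_mem _ a hx
    | lie x y _ _ hx hy => rw [habel x hx y hy]; exact zero_mem _
  obtain ⟨z, hz, hz0⟩ := (Submodule.ne_bot_iff _).mp hgp
  have hzW : z ∈ g (-1) := hspan z (hg.2.2.2 ▸ LieSubalgebra.mem_top z)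
  exact hz0 (Submodule.disjoint_def.mp (hg.1.1.submodule_iSupIndep.pairwiseDisjoint hp) z hz hzW)

theorem IsGLA.lie_mem_neg_two (hg : IsGLA g) {x y : L} (hx : x ∈ g (-1)) (hy : y ∈ g (-1)) :
    ⁅x, y⁆ ∈ g (-2) :=
  hg.2 (-1) (-1) x hx y hy

end GradedLieAlgebra

section BilinearFormOn

variable {L : Type*} [LieRing L] [LieAlgebra ℝ L] {B : L →ₗ[ℝ] L →ₗ[ℝ] ℝ} {W : Submodule ℝ L}

theorem SymmOn.isSymm_domRestrict (h : SymmOn B W) :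
    LinearMap.BilinForm.IsSymm (B.domRestrict₁₂ W W) :=
  ⟨fun x y => h x x.2 y y.2⟩

theorem NondegOn.nondegenerate_domRestrict (h : NondegOn B W) (hs : SymmOn B W) :
    LinearMap.BilinForm.Nondegenerate (B.domRestrict₁₂ W W) :=
  hs.isSymm_domRestrict.isRefl.nondegenerate_iff_separatingLeft.mpr fun x hx =>
    Subtype.ext (h x x.2 fun y hy => hx ⟨y, hy⟩)

end BilinearFormOn

theorem conformal_factor_zero_of_dim_two_general
    {M : Type*} [LieRing M] [LieAlgebra ℝ M]
    (g : ℤ → Submodule ℝ M) (hFGLA : IsFGLA g) (hg2 : g (-2) ≠ ⊥)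
    (hdim : Module.finrank ℝ ↥(g (-1)) = 2)
    (B : M →ₗ[ℝ] M →ₗ[ℝ] ℝ) (hBsymm : SymmOn B (g (-1))) (hBnd : NondegOn B (g (-1)))
    (D : M →ₗ[ℝ] M) (hDder : IsLieDeriv D)
    (hDgr : ∀ p : ℤ, p < 0 → ∀ x ∈ g p, D x ∈ g p)
    (hDco : CoOn B (g (-1)) D)
    (hDvan : ∀ p : ℤ, p ≤ -2 → ∀ x ∈ g p, D x = 0) :
    SoOn B (g (-1)) D := by
  obtain ⟨η, hη⟩ := hDco
  have : Module.Finite ℝ (g (-1)) := Module.finite_of_finrank_eq_succ hdim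
  let A : Module.End ℝ (g (-1)) := D.restrict (hDgr (-1) (by norm_num))
  let bracket := (LieModule.toEnd ℝ M M : M →ₗ[ℝ] Module.End ℝ M).compl₁₂
    (g (-1)).subtype (g (-1)).subtype
  have htrace : trace ℝ _ A = 0 := by
    obtain ⟨x, hx, y, hy, hxy⟩ := hFGLA.exists_lie_ne_zero (p := -2) (by norm_num) hg2
    have hDxy := (show bracket.IsAlt from fun x => lie_self _).apply_add_apply_eq_trace_smul
      hdim A ⟨x, hx⟩ ⟨y, hy⟩
    simp only [bracket, A, LinearMap.compl₁₂_apply, Submodule.subtype_apply,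
      LinearMap.coe_restrict_apply, LieHom.coe_toLinearMap, LieModule.toEnd_apply_apply] at hDxy
    rw [← hDder, hDvan (-2) le_rfl _ (hFGLA.1.lie_mem_neg_two hx hy)] at hDxy
    exact (smul_eq_zero.mp hDxy.symm).resolve_right hxy
  have hconf := LinearMap.BilinForm.mul_finrank_eq_two_mul_trace
    (hBnd.nondegenerate_domRestrict hBsymm) hBsymm.isSymm_domRestrict (A := A) (η := η)
    fun x y => hη x x.2 y y.2
  rw [hdim, htrace] at hconf
  have hη0 : η = 0 := by simpa using hconf
  intro x hx y hy
  simpa [hη0] using hη x hx y hy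

/-- Let `𝔪` be an FGLA with `𝔤₋₂ ≠ 0` and `dim 𝔤₋₁ = 2`, and `g` a
nondegenerate symmetric bilinear form on `𝔤₋₁`. Any grading-preserving derivation `D`
of `𝔪` with `D|𝔤₋₁ ∈ co(𝔤₋₁, g)` that vanishes on `𝔤_p` for all `p ≤ -2` satisfies
`D|𝔤₋₁ ∈ so(𝔤₋₁, g)`: its conformal factor is zero. -/
theorem conformal_factor_zero_of_dim_two
    {M : Type*} [LieRing M] [LieAlgebra ℝ M] [FiniteDimensional ℝ M]
    (g : ℤ → Submodule ℝ M) (hFGLA : IsFGLA g) (hg2 : g (-2) ≠ ⊥)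
    (hdim : Module.finrank ℝ ↥(g (-1)) = 2)
    (B : M →ₗ[ℝ] M →ₗ[ℝ] ℝ) (hBsymm : SymmOn B (g (-1))) (hBnd : NondegOn B (g (-1)))
    (D : M →ₗ[ℝ] M) (hDder : IsLieDeriv D)
    (hDgr : ∀ p : ℤ, p < 0 → ∀ x ∈ g p, D x ∈ g p)
    (hDco : CoOn B (g (-1)) D)
    (hDvan : ∀ p : ℤ, p ≤ -2 → ∀ x ∈ g p, D x = 0) :
    SoOn B (g (-1)) D :=
  conformal_factor_zero_of_dim_two_general g hFGLA hg2 hdim B hBsymm hBnd D hDder hDgr hDco hDvan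
end

section
/- Let V be a finite-dimensional real vector space and g a nondegenerate symmetric bilinear form on V of signature (r,s). Let 𝔞 be a linear subspace of End(V) contained in so(V,g), and suppose V decomposes as a direct sum of joint eigenspaces of 𝔞: there exist finitely many linear functionals λ₁,…,λ_k on 𝔞 such that V = ⊕_{i=1}^k V^{λ_i}, where V^{λ} = {v ∈ V : A v = λ(A) v for all A ∈ 𝔞}. Then V contains a subspace U that is totally isotropic for g with dim U ≥ dim 𝔞; consequently dim 𝔞 ≤ min{r,s}. -/
/-!
Pairing the eigenvalue equations with `B(Av, w) + B(v, Aw) = 0` shows that weight spaces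
`V^λ`, `V^μ` are `B`-orthogonal unless `μ = -λ`; by nondegeneracy, `-λ` therefore occurs
whenever `λ` does. Pick `A₀ ∈ 𝔞` on which no nonzero weight vanishes. The sum `U` of the weight
spaces with `λ(A₀) > 0` is totally isotropic. The occurring weights separate the points of `𝔞`,
and every one of them is `0` or `±` a positive one, so the positive weights already do; hence
`dim 𝔞 ≤ #{positive weights} ≤ dim U`. Finally a totally isotropic subspace meets the negative
definite part trivially, so `dim U ≤ r`, and likewise `dim U ≤ s`.
-/

open Module

theorem Module.Dual.exists_forall_apply_ne_zero {K M ι : Type*} [Field K] [Infinite K]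
    [AddCommGroup M] [Module K M] [Finite ι] (f : ι → Dual K M) :
    ∃ a : M, ∀ i, f i ≠ 0 → f i a ≠ 0 := by
  by_contra! h
  have hcover : ⋃ i : {i // f i ≠ 0}, (LinearMap.ker (f i) : Set M) = Set.univ :=
    Set.eq_univ_of_forall fun a => by
      obtain ⟨i, hi, hia⟩ := h a
      exact Set.mem_iUnion.mpr ⟨⟨i, hi⟩, hia⟩
  obtain ⟨i, hi⟩ := Subspace.exists_eq_top_of_iUnion_eq_univ hcover
  exact i.2 (LinearMap.ker_eq_top.mp hi)

theorem Submodule.finrank_le_of_isotropic_of_isCompl_anisotropic {K V : Type*} [Field K]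
    [AddCommGroup V] [Module K V] [FiniteDimensional K V] {B : V →ₗ[K] V →ₗ[K] K}
    {U P N : Submodule K V} (hU : ∀ x ∈ U, B x x = 0) (hN : ∀ x ∈ N, x ≠ 0 → B x x ≠ 0)
    (hPN : IsCompl P N) : finrank K U ≤ finrank K P := by
  have hUN : Disjoint U N := Submodule.disjoint_def.mpr fun x hxU hxN =>
    by_contra fun hx => hN x hxN hx (hU x hxU)
  have := Submodule.finrank_add_finrank_le_of_disjoint hUN
  have := Submodule.finrank_add_eq_of_isCompl hPN
  omega

theorem LinearMap.apply_eq_zero_of_mem_iSup {K V ι κ : Type*} [Field K] [AddCommGroup V]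
    [Module K V] {B : V →ₗ[K] V →ₗ[K] K} {W : ι → Submodule K V} {W' : κ → Submodule K V}
    (h : ∀ i j, ∀ x ∈ W i, ∀ y ∈ W' j, B x y = 0) :
    ∀ x ∈ ⨆ i, W i, ∀ y ∈ ⨆ j, W' j, B x y = 0 := by
  intro x hx y hy
  refine (iSup_le fun i x' hx' => ?_ : ⨆ i, W i ≤ LinearMap.ker (B.flip y)) hx
  exact (iSup_le fun j y' hy' => h i j x' hx' y' hy' : ⨆ j, W' j ≤ LinearMap.ker (B x')) hy

theorem LinearMap.apply_eq_zero_of_eigenvalue_add_ne_zero {K V : Type*} [Field K]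
    [AddCommGroup V] [Module K V] {B : V →ₗ[K] V →ₗ[K] K} {A : V →ₗ[K] V}
    (hA : ∀ x y, B (A x) y + B x (A y) = 0) {v w : V} {a b : K}
    (hv : A v = a • v) (hw : A w = b • w) (hab : a + b ≠ 0) : B v w = 0 := by
  have h := hA v w
  rw [hv, hw, map_smul, map_smul, LinearMap.smul_apply, smul_eq_mul, smul_eq_mul, ← add_mul] at h
  exact (mul_eq_zero.mp h).resolve_left hab

theorem iSupIndep.natCard_le_finrank_iSup {K V ι : Type*} [Field K] [AddCommGroup V]
    [Module K V] [FiniteDimensional K V] {W : ι → Submodule K V} (hind : iSupIndep W)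
    (hne : ∀ i, W i ≠ ⊥) : Nat.card ι ≤ finrank K ↥(⨆ i, W i) := by
  choose v hvW hv0 using fun i => (Submodule.ne_bot_iff (W i)).mp (hne i)
  have hli : LinearIndependent K v := hind.linearIndependent W hvW hv0
  have hli' : LinearIndependent K fun i => (⟨v i, le_iSup W i (hvW i)⟩ : ↥(⨆ j, W j)) :=
    LinearIndependent.of_comp (⨆ i, W i).subtype hli
  have := hli'.finite
  have := Fintype.ofFinite ι
  simpa [Nat.card_eq_fintype_card] using hli'.fintype_card_le_finrank

section Weights

variable {K V ι : Type*} [Field K] [AddCommGroup V] [Module K V]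
  {𝔞 : Submodule K (V →ₗ[K] V)} {lam : ι → Dual K 𝔞} {W : ι → Submodule K V}

theorem eq_zero_of_forall_weight_eq_zero
    (hW : ∀ i, ∀ v ∈ W i, ∀ A : 𝔞, (A : V →ₗ[K] V) v = lam i A • v) (htop : ⨆ i, W i = ⊤)
    {A : 𝔞} (hA : ∀ i, W i ≠ ⊥ → lam i A = 0) : A = 0 := by
  suffices LinearMap.ker (A : V →ₗ[K] V) = ⊤ from Subtype.ext (LinearMap.ker_eq_top.mp this)
  rw [eq_top_iff, ← htop]
  refine iSup_le fun i v hv => ?_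
  by_cases hi : W i = ⊥
  · rw [hi, Submodule.mem_bot] at hv
    simp [hv]
  · simp [LinearMap.mem_ker, hW i v hv A, hA i hi]

variable {B : V →ₗ[K] V →ₗ[K] K} (hso : ∀ A ∈ 𝔞, ∀ x y : V, B (A x) y + B x (A y) = 0)
  (hW : ∀ i, ∀ v ∈ W i, ∀ A : 𝔞, (A : V →ₗ[K] V) v = lam i A • v)
include hso hW

theorem apply_eq_zero_of_weight_add_ne_zero {i j : ι} (hij : lam i + lam j ≠ 0)
    {v w : V} (hv : v ∈ W i) (hw : w ∈ W j) : B v w = 0 := by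
  obtain ⟨A, hA⟩ := DFunLike.ne_iff.mp hij
  exact LinearMap.apply_eq_zero_of_eigenvalue_add_ne_zero (hso A A.2) (hW i v hv A)
    (hW j w hw A) hA

theorem exists_weight_eq_neg (hBnd : ∀ x : V, (∀ y : V, B x y = 0) → x = 0)
    (htop : ⨆ i, W i = ⊤) {i : ι} (hi : W i ≠ ⊥) : ∃ j, lam j = -lam i ∧ W j ≠ ⊥ := by
  by_contra! h
  refine hi ((Submodule.eq_bot_iff _).mpr fun v hv => hBnd v fun y => ?_)
  have hker : ⨆ j, W j ≤ LinearMap.ker (B v) := iSup_le fun j w hw => by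
    by_cases hj : lam j = -lam i
    · rw [h j hj, Submodule.mem_bot] at hw
      simp [hw]
    · exact apply_eq_zero_of_weight_add_ne_zero hso hW
        (fun hij => hj (eq_neg_of_add_eq_zero_right hij)) hv hw
  exact hker (htop ▸ Submodule.mem_top)

variable [LinearOrder K] [IsStrictOrderedRing K] {A₀ : 𝔞}

theorem isotropic_iSup_of_weight_pos {p : ι → Prop} (hp : ∀ i, p i → 0 < lam i A₀) :
    ∀ x ∈ ⨆ i : Subtype p, W i, ∀ y ∈ ⨆ i : Subtype p, W i, B x y = 0 :=
  LinearMap.apply_eq_zero_of_mem_iSup fun i j _ hx _ hy =>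
    apply_eq_zero_of_weight_add_ne_zero hso hW
      (DFunLike.ne_iff.mpr ⟨A₀, (add_pos (hp i i.2) (hp j j.2)).ne'⟩) hx hy

theorem finrank_le_natCard_weight_pos [Finite ι]
    (hBnd : ∀ x : V, (∀ y : V, B x y = 0) → x = 0) (htop : ⨆ i, W i = ⊤)
    (hA₀ : ∀ i, lam i ≠ 0 → lam i A₀ ≠ 0) :
    finrank K 𝔞 ≤ Nat.card {i // W i ≠ ⊥ ∧ 0 < lam i A₀} := by
  let S := {i // W i ≠ ⊥ ∧ 0 < lam i A₀}
  have := Fintype.ofFinite S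
  let f : 𝔞 →ₗ[K] S → K := LinearMap.pi fun i => lam i
  have hf : Function.Injective f := by
    refine (injective_iff_map_eq_zero f).mpr fun A hA => ?_
    have hS : ∀ i (hi : W i ≠ ⊥) (hpos : 0 < lam i A₀), lam i A = 0 :=
      fun i hi hpos => congrFun hA ⟨i, hi, hpos⟩
    refine eq_zero_of_forall_weight_eq_zero hW htop fun i hi => ?_
    by_cases h0 : lam i = 0
    · simp [h0]
    rcases (hA₀ i h0).lt_or_gt with hneg | hpos
    · obtain ⟨j, hj, hWj⟩ := exists_weight_eq_neg hso hW hBnd htop hi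
      have := hS j hWj (by simpa [hj] using hneg)
      simpa [hj] using this
    · exact hS i hi hpos
  simpa [Nat.card_eq_fintype_card] using LinearMap.finrank_le_finrank_of_injective hf

end Weights

theorem dim_diagonalizable_subalgebra_le_min_signature_general
    {V : Type*} [AddCommGroup V] [Module ℝ V] [FiniteDimensional ℝ V]
    (B : V →ₗ[ℝ] V →ₗ[ℝ] ℝ)
    (hBnd : ∀ x : V, (∀ y : V, B x y = 0) → x = 0)
    (r s : ℕ)
    (hsig : ∃ P N : Submodule ℝ V, P ⊓ N = ⊥ ∧ P ⊔ N = ⊤ ∧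
      Module.finrank ℝ ↥P = r ∧ Module.finrank ℝ ↥N = s ∧
      (∀ x ∈ P, ∀ y ∈ N, B x y = 0) ∧
      (∀ x ∈ P, x ≠ 0 → 0 < B x x) ∧ (∀ x ∈ N, x ≠ 0 → B x x < 0))
    (𝔞 : Submodule ℝ (V →ₗ[ℝ] V))
    (hso : ∀ A ∈ 𝔞, ∀ x y : V, B (A x) y + B x (A y) = 0)
    (k : ℕ) (lam : Fin k → (↥𝔞 →ₗ[ℝ] ℝ)) (W : Fin k → Submodule ℝ V)
    (hW : ∀ i : Fin k, ∀ v : V, v ∈ W i ↔ ∀ A : ↥𝔞, (A : V →ₗ[ℝ] V) v = lam i A • v)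
    (hdec : DirectSum.IsInternal W) :
    (∃ U : Submodule ℝ V, (∀ x ∈ U, ∀ y ∈ U, B x y = 0) ∧
      Module.finrank ℝ ↥𝔞 ≤ Module.finrank ℝ ↥U) ∧
    Module.finrank ℝ ↥𝔞 ≤ min r s := by
  obtain ⟨P, N, hPN, hPN', rfl, rfl, -, hPpos, hNneg⟩ := hsig
  have hWeig i v hv := (hW i v).mp hv
  have htop := hdec.submodule_iSup_eq_top
  obtain ⟨A₀, hA₀⟩ := Dual.exists_forall_apply_ne_zero lam
  set U := ⨆ i : {i // W i ≠ ⊥ ∧ 0 < lam i A₀}, W i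
  have hUiso : ∀ x ∈ U, ∀ y ∈ U, B x y = 0 :=
    isotropic_iSup_of_weight_pos hso hWeig fun _ hi => hi.2
  have hdim : finrank ℝ 𝔞 ≤ finrank ℝ U :=
    (finrank_le_natCard_weight_pos hso hWeig hBnd htop hA₀).trans <|
      (hdec.submodule_iSupIndep.comp Subtype.val_injective).natCard_le_finrank_iSup
        fun i => i.2.1
  have hPN : IsCompl P N := ⟨disjoint_iff.mpr hPN, codisjoint_iff.mpr hPN'⟩
  refine ⟨⟨U, hUiso, hdim⟩, hdim.trans (le_min ?_ ?_)⟩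
  · exact Submodule.finrank_le_of_isotropic_of_isCompl_anisotropic (fun x hx => hUiso x hx x hx)
      (fun x hx h => (hNneg x hx h).ne) hPN
  · exact Submodule.finrank_le_of_isotropic_of_isCompl_anisotropic (fun x hx => hUiso x hx x hx)
      (fun x hx h => (hPpos x hx h).ne') hPN.symm

/-- Let `V` be a finite-dimensional real vector space with a nondegenerate
symmetric bilinear form `B` of signature `(r, s)`, and let `𝔞 ⊆ so(V, B)` be a linear
subspace of endomorphisms such that `V` is the direct sum of joint eigenspaces of `𝔞`.
Then `V` contains a totally isotropic subspace `U` with `dim U ≥ dim 𝔞`, and consequently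
`dim 𝔞 ≤ min r s`. -/
theorem dim_diagonalizable_subalgebra_le_min_signature
    {V : Type*} [AddCommGroup V] [Module ℝ V] [FiniteDimensional ℝ V]
    (B : V →ₗ[ℝ] V →ₗ[ℝ] ℝ)
    (hBsymm : ∀ x y : V, B x y = B y x)
    (hBnd : ∀ x : V, (∀ y : V, B x y = 0) → x = 0)
    (r s : ℕ)
    (hsig : ∃ P N : Submodule ℝ V, P ⊓ N = ⊥ ∧ P ⊔ N = ⊤ ∧
      Module.finrank ℝ ↥P = r ∧ Module.finrank ℝ ↥N = s ∧
      (∀ x ∈ P, ∀ y ∈ N, B x y = 0) ∧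
      (∀ x ∈ P, x ≠ 0 → 0 < B x x) ∧ (∀ x ∈ N, x ≠ 0 → B x x < 0))
    (𝔞 : Submodule ℝ (V →ₗ[ℝ] V))
    (hso : ∀ A ∈ 𝔞, ∀ x y : V, B (A x) y + B x (A y) = 0)
    (k : ℕ) (lam : Fin k → (↥𝔞 →ₗ[ℝ] ℝ)) (W : Fin k → Submodule ℝ V)
    (hW : ∀ i : Fin k, ∀ v : V, v ∈ W i ↔ ∀ A : ↥𝔞, (A : V →ₗ[ℝ] V) v = lam i A • v)
    (hdec : DirectSum.IsInternal W) :
    (∃ U : Submodule ℝ V, (∀ x ∈ U, ∀ y ∈ U, B x y = 0) ∧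
      Module.finrank ℝ ↥𝔞 ≤ Module.finrank ℝ ↥U) ∧
    Module.finrank ℝ ↥𝔞 ≤ min r s :=
  dim_diagonalizable_subalgebra_le_min_signature_general B hBnd r s hsig 𝔞 hso k lam W hW hdec
end

section
/- Let 𝔤 = ⊕_{p∈ℤ}𝔤_p be a transitive GLA over ℝ whose negative part is an FGLA with 𝔤_{-2} ≠ 0, and let g be a nondegenerate symmetric bilinear form on 𝔤_{-1} of signature (r,s) such that ad X|𝔤_{-1} ∈ co(𝔤_{-1},g) for every X ∈ 𝔤₀. Suppose 𝔤₀ contains a characteristic element E, i.e., ⁅E,X⁆ = pX for all X ∈ 𝔤_p and all p. Let 𝔞 be an abelian Lie subalgebra of 𝔤 contained in 𝔤₀ with E ∈ 𝔞, such that the adjoint action of 𝔞 on 𝔤_{-1} is simultaneously diagonalizable over ℝ (𝔤_{-1} is the direct sum of the joint eigenspaces {v : ⁅A,v⁆ = λ(A)v for all A ∈ 𝔞} over finitely many linear functionals λ on 𝔞). Then dim 𝔞 ≤ min{r,s} + 1. -/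
open scoped TensorProduct

/-!
The conformal factor of `ad A` on `𝔤₋₁` is a linear form `η` on `𝔞`, and `B` pairs the joint
eigenspaces of weights `α` and `β` trivially unless `α + β = η`. With `μ = α - η / 2`, choose one
weight from each pair `±μ ≠ 0`: eigenvectors for the chosen weights span a totally isotropic
subspace, so there are at most `min r s` of them. By transitivity `𝔞` acts faithfully on `𝔤₋₁`,
so the weights span `𝔞*`; they all lie in the span of `η` and the chosen `μ`.
-/

open Module

theorem Module.finrank_le_card_of_forall_eq_zero {K M ι : Type*} [Field K] [AddCommGroup M]
    [Module K M] [Fintype ι] (f : ι → M →ₗ[K] K) (hf : ∀ x, (∀ i, f i x = 0) → x = 0) :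
    finrank K M ≤ Fintype.card ι := by
  have hinj : Function.Injective (LinearMap.pi f) := by
    rw [← LinearMap.ker_eq_bot, Submodule.eq_bot_iff]
    exact fun x hx => hf x fun i => congrFun (LinearMap.mem_ker.1 hx) i
  simpa using LinearMap.finrank_le_finrank_of_injective hinj

theorem Submodule.finrank_add_finrank_le_of_disjoint_of_le {K M : Type*} [DivisionRing K]
    [AddCommGroup M] [Module K M] {U N V : Submodule K M} [FiniteDimensional K V]
    (hU : U ≤ V) (hN : N ≤ V) (hUN : Disjoint U N) :
    finrank K U + finrank K N ≤ finrank K V := by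
  have := Submodule.finiteDimensional_of_le hU
  have := Submodule.finiteDimensional_of_le hN
  rw [← Submodule.finrank_sup_add_finrank_inf_eq, hUN.eq_bot, finrank_bot, add_zero]
  exact Submodule.finrank_mono (sup_le hU hN)

theorem LinearMap.apply_eq_zero_of_mem_span {R M N : Type*} [CommSemiring R] [AddCommMonoid M]
    [Module R M] [AddCommMonoid N] [Module R N] (B : M →ₗ[R] M →ₗ[R] N) {S : Set M}
    (hS : ∀ x ∈ S, ∀ y ∈ S, B x y = 0) {x y : M} (hx : x ∈ Submodule.span R S)
    (hy : y ∈ Submodule.span R S) : B x y = 0 := by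
  have hSy : ∀ y ∈ S, B x y = 0 := fun y hy =>
    LinearMap.eqOn_span (f := B.flip y) (g := 0) (fun x hx => hS x hx y hy) hx
  exact LinearMap.eqOn_span (f := B x) (g := 0) hSy hy

theorem Finset.exists_sign_representatives {ι M : Type*} [DecidableEq ι] [AddCommGroup M]
    [IsAddTorsionFree M] (f : ι → M) (J : Finset ι) (hJ : ∀ j ∈ J, f j ≠ 0) :
    ∃ I ⊆ J, (∀ i ∈ I, ∀ i' ∈ I, f i + f i' ≠ 0) ∧
      ∀ j ∈ J, ∃ i ∈ I, f j = f i ∨ f j = -f i := by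
  induction J using Finset.induction_on with
  | empty => exact ⟨∅, subset_refl _, by simp, by simp⟩
  | insert j J _ ih =>
    obtain ⟨I, hIJ, hI, hJI⟩ := ih fun i hi => hJ i (mem_insert_of_mem hi)
    by_cases hjI : ∃ i ∈ I, f j = f i ∨ f j = -f i
    · refine ⟨I, hIJ.trans (subset_insert _ _), hI, ?_⟩
      simpa [hjI] using hJI
    · push Not at hjI
      refine ⟨insert j I, insert_subset_insert _ hIJ, ?_, ?_⟩
      · have hjj : f j + f j ≠ 0 := by
          rw [← two_nsmul, Ne, two_nsmul_eq_zero]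
          exact hJ j (mem_insert_self _ _)
        simp only [mem_insert, forall_eq_or_imp]
        refine ⟨⟨hjj, fun i hi h => (hjI i hi).2 (eq_neg_of_add_eq_zero_left h)⟩,
          fun i hi => ⟨fun h => (hjI i hi).2 (eq_neg_of_add_eq_zero_right h), hI i hi⟩⟩
      · simp only [mem_insert, forall_eq_or_imp, exists_eq_or_imp]
        exact ⟨by simp, fun i hi => Or.inr (hJI i hi)⟩

section Signature

variable {L : Type*} [LieRing L] [LieAlgebra ℝ L] {B : L →ₗ[ℝ] L →ₗ[ℝ] ℝ}
  {U V : Submodule ℝ L} {r s : ℕ}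

theorem disjoint_of_apply_self_eq_zero_of_apply_self_ne_zero (hU : ∀ x ∈ U, B x x = 0)
    (hV : ∀ x ∈ V, x ≠ 0 → B x x ≠ 0) : Disjoint U V := by
  rw [Submodule.disjoint_def]
  intro x hxU hxV
  by_contra hx
  exact hV x hxV hx (hU x hxU)

theorem HasSignatureOn.finrank_le_min_of_isotropic [FiniteDimensional ℝ V]
    (h : HasSignatureOn B V r s) (hUV : U ≤ V) (hU : ∀ x ∈ U, B x x = 0) :
    finrank ℝ U ≤ min r s := by
  obtain ⟨P, N, hPN, hPNV, rfl, rfl, -, hP, hN⟩ := h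
  have hPV : P ≤ V := hPNV ▸ le_sup_left
  have hNV : N ≤ V := hPNV ▸ le_sup_right
  have := Submodule.finiteDimensional_of_le hPV
  have := Submodule.finiteDimensional_of_le hNV
  have hV : finrank ℝ P + finrank ℝ N = finrank ℝ V := by
    rw [← Submodule.finrank_sup_add_finrank_inf_eq, hPN, hPNV, finrank_bot, add_zero]
  have hUP := Submodule.finrank_add_finrank_le_of_disjoint_of_le hUV hPV
    (disjoint_of_apply_self_eq_zero_of_apply_self_ne_zero hU fun x hx h0 => (hP x hx h0).ne')
  have hUN := Submodule.finrank_add_finrank_le_of_disjoint_of_le hUV hNV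
    (disjoint_of_apply_self_eq_zero_of_apply_self_ne_zero hU fun x hx h0 => (hN x hx h0).ne)
  omega

theorem HasSignatureOn.exists_apply_self_ne_zero (h : HasSignatureOn B V r s) (hV : V ≠ ⊥) :
    ∃ x ∈ V, B x x ≠ 0 := by
  by_contra! hB
  obtain ⟨P, N, -, hPNV, -, -, -, hP, hN⟩ := h
  have hPV : P ≤ V := hPNV ▸ le_sup_left
  have hNV : N ≤ V := hPNV ▸ le_sup_right
  have hP : P = ⊥ := (disjoint_of_apply_self_eq_zero_of_apply_self_ne_zero hB
    fun x hx h0 => (hP x hx h0).ne').eq_bot_of_ge hPV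
  have hN : N = ⊥ := (disjoint_of_apply_self_eq_zero_of_apply_self_ne_zero hB
    fun x hx h0 => (hN x hx h0).ne).eq_bot_of_ge hNV
  exact hV (by rw [← hPNV, hP, hN, sup_bot_eq])

end Signature

section Conformal

variable {L : Type*} [LieRing L] [LieAlgebra ℝ L] {B : L →ₗ[ℝ] L →ₗ[ℝ] ℝ}
  {V 𝔞 : Submodule ℝ L}

theorem exists_conformalFactor {x₀ : L} (hx₀ : x₀ ∈ V) (hBx₀ : B x₀ x₀ ≠ 0)
    (hco : ∀ A ∈ 𝔞, CoOn B V (LieAlgebra.ad ℝ L A)) :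
    ∃ η : 𝔞 →ₗ[ℝ] ℝ, ∀ A : 𝔞, ∀ x ∈ V, ∀ y ∈ V,
      B ⁅(A : L), x⁆ y + B x ⁅(A : L), y⁆ = η A * B x y := by
  refine ⟨(B x₀ x₀)⁻¹ • ((B.flip x₀ + B x₀) ∘ₗ
    (LieAlgebra.ad ℝ L : L →ₗ[ℝ] Module.End ℝ L).flip x₀ ∘ₗ 𝔞.subtype), ?_⟩
  intro A x hx y hy
  obtain ⟨c, hc⟩ := hco A A.2
  simp only [LieAlgebra.ad_apply] at hc
  have hη : (B x₀ x₀)⁻¹ * (B ⁅(A : L), x₀⁆ x₀ + B x₀ ⁅(A : L), x₀⁆) = c := by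
    rw [hc x₀ hx₀ x₀ hx₀]
    field_simp
  simpa [hη] using hc x hx y hy

theorem apply_eq_zero_of_add_ne_conformalFactor {η : 𝔞 →ₗ[ℝ] ℝ}
    (hη : ∀ A : 𝔞, ∀ x ∈ V, ∀ y ∈ V, B ⁅(A : L), x⁆ y + B x ⁅(A : L), y⁆ = η A * B x y)
    {α β : 𝔞 →ₗ[ℝ] ℝ} {x y : L} (hx : x ∈ V) (hy : y ∈ V)
    (hxα : ∀ A : 𝔞, ⁅(A : L), x⁆ = α A • x) (hyβ : ∀ A : 𝔞, ⁅(A : L), y⁆ = β A • y)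
    (hαβ : α + β ≠ η) : B x y = 0 := by
  obtain ⟨A, hA⟩ : ∃ A, α A + β A ≠ η A := by
    by_contra! h
    exact hαβ (LinearMap.ext h)
  have hAxy := hη A x hx y hy
  rw [hxα, hyβ, map_smul, LinearMap.smul_apply, map_smul, smul_eq_mul, smul_eq_mul] at hAxy
  have : (α A + β A - η A) * B x y = 0 := by linear_combination hAxy
  exact (mul_eq_zero.1 this).resolve_left (sub_ne_zero.2 hA)

end Conformal

section Weights

variable {L : Type*} [LieRing L] [LieAlgebra ℝ L] {V 𝔞 : Submodule ℝ L}
  {ι : Type*} [DecidableEq ι] {lam : ι → 𝔞 →ₗ[ℝ] ℝ} {W : ι → Submodule ℝ V}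

theorem lie_eq_zero_of_weights_eq_zero
    (hW : ∀ i, ∀ v : V, v ∈ W i ↔ ∀ A : 𝔞, ⁅(A : L), (v : L)⁆ = lam i A • (v : L))
    (hdec : DirectSum.IsInternal W) (A : 𝔞) (hA : ∀ i, W i ≠ ⊥ → lam i A = 0) :
    ∀ y ∈ V, ⁅(A : L), y⁆ = 0 := by
  have hker : ⊤ ≤ LinearMap.ker (LieAlgebra.ad ℝ L A ∘ₗ V.subtype) := by
    rw [← hdec.submodule_iSup_eq_top, iSup_le_iff]
    intro i v hv
    rcases eq_or_ne (W i) ⊥ with hWi | hWi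
    · rw [hWi, Submodule.mem_bot] at hv
      simp [hv]
    · simp [(hW i v).1 hv A, hA i hWi]
  exact fun y hy => hker (Submodule.mem_top (x := ⟨y, hy⟩))

variable {B : L →ₗ[ℝ] L →ₗ[ℝ] ℝ} {η : 𝔞 →ₗ[ℝ] ℝ} {r s : ℕ}

theorem card_le_min_of_add_ne_conformalFactor [FiniteDimensional ℝ V]
    (hη : ∀ A : 𝔞, ∀ x ∈ V, ∀ y ∈ V, B ⁅(A : L), x⁆ y + B x ⁅(A : L), y⁆ = η A * B x y)
    (hsig : HasSignatureOn B V r s)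
    (hW : ∀ i, ∀ v : V, v ∈ W i ↔ ∀ A : 𝔞, ⁅(A : L), (v : L)⁆ = lam i A • (v : L))
    (hdec : DirectSum.IsInternal W) (I : Finset ι) (hI : ∀ i ∈ I, W i ≠ ⊥)
    (hIη : ∀ i ∈ I, ∀ j ∈ I, lam i + lam j ≠ η) :
    I.card ≤ min r s := by
  choose v hvW hv0 using fun i : I => Submodule.exists_mem_ne_zero_of_ne_bot (hI i i.2)
  have hind : LinearIndependent ℝ fun i => (v i : L) :=
    ((hdec.submodule_iSupIndep.comp Subtype.coe_injective).linearIndependent _ hvW hv0).map'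
      V.subtype V.ker_subtype
  have hiso : ∀ x ∈ Submodule.span ℝ (Set.range fun i => (v i : L)), B x x = 0 := by
    refine fun x hx => B.apply_eq_zero_of_mem_span ?_ hx hx
    rintro _ ⟨i, rfl⟩ _ ⟨j, rfl⟩
    exact apply_eq_zero_of_add_ne_conformalFactor hη (v i).2 (v j).2 ((hW _ _).1 (hvW i))
      ((hW _ _).1 (hvW j)) (hIη i i.2 j j.2)
  have hUV : Submodule.span ℝ (Set.range fun i => (v i : L)) ≤ V :=
    Submodule.span_le.2 (Set.range_subset_iff.2 fun i => (v i).2)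
  simpa [finrank_span_eq_card hind] using hsig.finrank_le_min_of_isotropic hUV hiso

theorem finrank_le_card_of_weights_mem_span
    (hW : ∀ i, ∀ v : V, v ∈ W i ↔ ∀ A : 𝔞, ⁅(A : L), (v : L)⁆ = lam i A • (v : L))
    (hdec : DirectSum.IsInternal W) (hfaith : ∀ A : 𝔞, (∀ y ∈ V, ⁅(A : L), y⁆ = 0) → A = 0)
    (F : Finset (𝔞 →ₗ[ℝ] ℝ)) (hF : ∀ i, W i ≠ ⊥ → lam i ∈ Submodule.span ℝ (F : Set _)) :
    finrank ℝ 𝔞 ≤ F.card := by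
  refine (finrank_le_card_of_forall_eq_zero (fun f : F => (f : 𝔞 →ₗ[ℝ] ℝ)) fun A hA => ?_).trans
    (Fintype.card_coe F).le
  have hspan : Submodule.span ℝ (F : Set _) ≤ LinearMap.ker (LinearMap.applyₗ A) :=
    Submodule.span_le.2 fun f hf => hA ⟨f, hf⟩
  exact hfaith A (lie_eq_zero_of_weights_eq_zero hW hdec A fun i hWi => hspan (hF i hWi))

end Weights

theorem dim_diagonalizable_abelian_le_general
    {L : Type*} [LieRing L] [LieAlgebra ℝ L]
    (g : ℤ → Submodule ℝ L) (htr : IsTransitiveGLA g)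
    (hfund : IsFundamental g)
    (hnegfin : ∀ p : ℤ, p < 0 → FiniteDimensional ℝ ↥(g p))
    (B : L →ₗ[ℝ] L →ₗ[ℝ] ℝ) (r s : ℕ)
    (hsig : HasSignatureOn B (g (-1)) r s)
    (had : ∀ x ∈ g 0, CoOn B (g (-1)) (LieAlgebra.ad ℝ L x))
    (𝔞 : Submodule ℝ L) (h𝔞0 : 𝔞 ≤ g 0)
    (k : ℕ) (lam : Fin k → (↥𝔞 →ₗ[ℝ] ℝ)) (W : Fin k → Submodule ℝ ↥(g (-1)))
    (hW : ∀ i : Fin k, ∀ v : ↥(g (-1)),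
      v ∈ W i ↔ ∀ A : ↥𝔞, ⁅(A : L), (v : L)⁆ = lam i A • (v : L))
    (hdec : DirectSum.IsInternal W) :
    Module.finrank ℝ ↥𝔞 ≤ min r s + 1 := by
  classical
  have := hnegfin (-1) (by norm_num)
  have : IsAddTorsionFree (𝔞 →ₗ[ℝ] ℝ) := .of_isTorsionFree ℝ _
  obtain ⟨x₀, hx₀, hBx₀⟩ := hsig.exists_apply_self_ne_zero hfund.1
  obtain ⟨η, hη⟩ := exists_conformalFactor hx₀ hBx₀ fun A hA => had A (h𝔞0 hA)
  -- after the shift, `lam i + lam j = η` reads `μ i + μ j = 0`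
  set μ : Fin k → 𝔞 →ₗ[ℝ] ℝ := fun i => lam i - (2⁻¹ : ℝ) • η with hμ
  obtain ⟨I, hIJ, hIμ, hμI⟩ :=
    Finset.exists_sign_representatives μ {i | W i ≠ ⊥ ∧ μ i ≠ 0} (by simp +contextual)
  have hcard : I.card ≤ min r s := by
    refine card_le_min_of_add_ne_conformalFactor hη hsig hW hdec I
      (fun i hi => (Finset.mem_filter.1 (hIJ hi)).2.1) fun i hi j hj hij => hIμ i hi j hj ?_
    rw [hμ, ← sub_eq_zero.2 hij]
    module
  set F := insert η (I.image μ)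
  have hηF : η ∈ Submodule.span ℝ (F : Set _) :=
    Submodule.subset_span (Finset.mem_insert_self η _)
  have hμF : ∀ j, W j ≠ ⊥ → μ j ∈ Submodule.span ℝ (F : Set _) := by
    intro j hWj
    by_cases hμj : μ j = 0
    · simp [hμj]
    have hμiF : ∀ i ∈ I, μ i ∈ Submodule.span ℝ (F : Set _) := fun i hi =>
      Submodule.subset_span (Finset.mem_insert_of_mem (Finset.mem_image_of_mem μ hi))
    obtain ⟨i, hi, hji | hji⟩ := hμI j (by simp [hWj, hμj]) <;> rw [hji]
    exacts [hμiF i hi, neg_mem (hμiF i hi)]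
  have hdim := finrank_le_card_of_weights_mem_span hW hdec
    (fun A hA => Subtype.ext (htr 0 le_rfl A (h𝔞0 A.2) hA)) F fun j hWj => by
      simpa [hμ] using add_mem (hμF j hWj) (Submodule.smul_mem _ (2⁻¹ : ℝ) hηF)
  calc finrank ℝ 𝔞 ≤ F.card := hdim
    _ ≤ I.card + 1 := (Finset.card_insert_le _ _).trans (Nat.succ_le_succ Finset.card_image_le)
    _ ≤ min r s + 1 := Nat.succ_le_succ hcard

/-- Let `𝔤` be a transitive GLA whose negative part is an FGLA with
`𝔤₋₂ ≠ 0`, equipped with a nondegenerate symmetric bilinear form `g` of signature `(r, s)`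
on `𝔤₋₁` with respect to which `𝔤₀` acts conformally. If `𝔞 ⊆ 𝔤₀` is an abelian subalgebra
containing the characteristic element `E` whose adjoint action on `𝔤₋₁` is simultaneously
diagonalizable over `ℝ`, then `dim 𝔞 ≤ min r s + 1`. -/
theorem dim_diagonalizable_abelian_le
    {L : Type*} [LieRing L] [LieAlgebra ℝ L]
    (g : ℤ → Submodule ℝ L) (hg : IsGLA g) (htr : IsTransitiveGLA g)
    (hfund : IsFundamental g) (hg2 : g (-2) ≠ ⊥)
    (hnegfin : ∀ p : ℤ, p < 0 → FiniteDimensional ℝ ↥(g p))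
    (B : L →ₗ[ℝ] L →ₗ[ℝ] ℝ) (r s : ℕ)
    (hBsymm : SymmOn B (g (-1))) (hBnd : NondegOn B (g (-1)))
    (hsig : HasSignatureOn B (g (-1)) r s)
    (had : ∀ x ∈ g 0, CoOn B (g (-1)) (LieAlgebra.ad ℝ L x))
    (E : L) (hE0 : E ∈ g 0) (hEchar : ∀ p : ℤ, ∀ x ∈ g p, ⁅E, x⁆ = (p : ℝ) • x)
    (𝔞 : Submodule ℝ L) (h𝔞0 : 𝔞 ≤ g 0) (hE𝔞 : E ∈ 𝔞)
    (h𝔞ab : ∀ a ∈ 𝔞, ∀ b ∈ 𝔞, ⁅a, b⁆ = 0)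
    (k : ℕ) (lam : Fin k → (↥𝔞 →ₗ[ℝ] ℝ)) (W : Fin k → Submodule ℝ ↥(g (-1)))
    (hW : ∀ i : Fin k, ∀ v : ↥(g (-1)),
      v ∈ W i ↔ ∀ A : ↥𝔞, ⁅(A : L), (v : L)⁆ = lam i A • (v : L))
    (hdec : DirectSum.IsInternal W) :
    Module.finrank ℝ ↥𝔞 ≤ min r s + 1 :=
  dim_diagonalizable_abelian_le_general g htr hfund hnegfin B r s hsig had 𝔞 h𝔞0 k lam W hW hdec
end

section
/- Let 𝔤 = ⊕_{p∈ℤ}𝔤_p be a transitive GLA over ℝ, and let I be an ideal of 𝔤 that is graded, i.e., I = ⊕_{p∈ℤ}(I ∩ 𝔤_p). If I ∩ 𝔤_p = 0 for every p < 0, then I = 0. -/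
open scoped TensorProduct

section GradedIdeal

variable {L : Type*} [LieRing L] [LieAlgebra ℝ L] {g : ℤ → Submodule ℝ L} {I : LieIdeal ℝ L}

/-- For `x ∈ I ⊓ g (p + 1)`, `⁅x, g (-1)⁆ ⊆ I ⊓ g p = 0`, so `x = 0` by transitivity. -/
theorem inf_grade_succ_eq_bot
    (hbr : ∀ p q : ℤ, ∀ x ∈ g p, ∀ y ∈ g q, ⁅x, y⁆ ∈ g (p + q))
    (htr : IsTransitiveGLA g) {p : ℤ} (hp : -1 ≤ p)
    (h : (I : Submodule ℝ L) ⊓ g p = ⊥) :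
    (I : Submodule ℝ L) ⊓ g (p + 1) = ⊥ := by
  refine eq_bot_iff.mpr fun x ⟨hxI, hxg⟩ => (Submodule.mem_bot ℝ).mpr ?_
  refine htr (p + 1) (by omega) x hxg fun y hy => ?_
  have hmem : ⁅x, y⁆ ∈ (I : Submodule ℝ L) ⊓ g p := by
    refine ⟨?_, by simpa using hbr (p + 1) (-1) x hxg y hy⟩
    rw [← lie_skew]
    exact neg_mem (I.lie_mem hxI)
  rw [h] at hmem
  exact (Submodule.mem_bot ℝ).mp hmem

theorem inf_grade_eq_bot
    (hbr : ∀ p q : ℤ, ∀ x ∈ g p, ∀ y ∈ g q, ⁅x, y⁆ ∈ g (p + q))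
    (htr : IsTransitiveGLA g)
    (hneg : ∀ p : ℤ, p < 0 → (I : Submodule ℝ L) ⊓ g p = ⊥) (p : ℤ) :
    (I : Submodule ℝ L) ⊓ g p = ⊥ := by
  obtain hp | hp := lt_or_ge p (-1)
  · exact hneg p (by omega)
  · induction p, hp using Int.leInduction with
    | base => exact hneg (-1) (by norm_num)
    | succ q hq ih => exact inf_grade_succ_eq_bot hbr htr hq ih

end GradedIdeal

/-- In a transitive GLA over `ℝ`, a graded ideal whose intersections with
all negative graded pieces vanish must be the zero ideal. -/
theorem graded_ideal_trivial_of_neg_trivial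
    {L : Type*} [LieRing L] [LieAlgebra ℝ L]
    (g : ℤ → Submodule ℝ L) (hg : IsGLA g) (htr : IsTransitiveGLA g)
    (I : LieIdeal ℝ L)
    (hgraded : (I : Submodule ℝ L) = ⨆ p : ℤ, ((I : Submodule ℝ L) ⊓ g p))
    (hneg : ∀ p : ℤ, p < 0 → (I : Submodule ℝ L) ⊓ g p = ⊥) :
    I = ⊥ := by
  rw [← LieSubmodule.toSubmodule_eq_bot, ← LieIdeal.toLieSubalgebra_toSubmodule, hgraded]
  exact iSup_eq_bot.mpr (inf_grade_eq_bot hg.2 htr hneg)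
end

section
/- Let 𝔤 = ⊕_{p∈ℤ}𝔤_p be a finite-dimensional transitive GLA over ℝ, and let 𝔩 be a Lie subalgebra of 𝔤 that is graded (𝔩 = ⊕_{p∈ℤ}(𝔩 ∩ 𝔤_p)) and satisfies 𝔩 ∩ 𝔤_p = 𝔤_p for every p < 0. If 𝔩 is a semisimple Lie algebra, then 𝔤 is semisimple (its radical is zero). -/
/-!
Let `𝔤_{<n} = ⨁_{p<n} 𝔤_p`. A Lie ideal `I` of a transitive GLA with `I ∩ 𝔤_{<0} = 0` vanishes:
if `I ∩ 𝔤_{<n} = 0` and `x = x_n + x' ∈ I ∩ 𝔤_{<n+1}` with `x_n ∈ 𝔤_n`, then every `⁅x, y⁆` with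
`y ∈ 𝔤_{-1}` lies in `I ∩ 𝔤_{<n}`, so it is zero; its degree `n - 1` part `⁅x_n, y⁆` is then zero,
and transitivity gives `x_n = 0`, whence `x ∈ I ∩ 𝔤_{<n} = 0`. The radical of `𝔤` meets
`𝔤_{<0} ⊆ 𝔩` in a solvable ideal of the semisimple `𝔩`, hence trivially.
-/

open scoped TensorProduct

theorem LieSubalgebra.disjoint_of_isSolvable {R L : Type*} [CommRing R] [LieRing L]
    [LieAlgebra R L] (l : LieSubalgebra R L) [LieAlgebra.HasTrivialRadical R l]
    (I : LieIdeal R L) [LieAlgebra.IsSolvable I] :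
    Disjoint (l : Submodule R L) (I : Submodule R L) := by
  let J : LieIdeal R l := I.comap l.incl
  let f : J →ₗ⁅R⁆ I :=
    { toFun := fun x => ⟨x.1.1, x.2⟩
      map_add' := fun _ _ => rfl
      map_smul' := fun _ _ => rfl
      map_lie' := rfl }
  have : LieAlgebra.IsSolvable J :=
    Function.Injective.lieAlgebra_isSolvable (f := f) fun _ _ h =>
      Subtype.ext (Subtype.ext (congrArg Subtype.val h :))
  have hJ : J = ⊥ := LieAlgebra.HasTrivialRadical.eq_bot_of_isSolvable J
  rw [Submodule.disjoint_def]
  intro x hxl hxI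
  have hx : (⟨x, hxl⟩ : l) ∈ J := hxI
  rw [hJ, LieSubmodule.mem_bot] at hx
  exact congrArg Subtype.val hx

namespace Submodule

variable {R M : Type*} [Semiring R] [AddCommMonoid M] [Module R M]

def degreeLT (g : ℤ → Submodule R M) (n : ℤ) : Submodule R M :=
  ⨆ p ∈ Set.Iio n, g p

variable (g : ℤ → Submodule R M)

theorem degreeLT_add_one (n : ℤ) : degreeLT g (n + 1) = g n ⊔ degreeLT g n := by
  rw [degreeLT, Set.Iio_add_one_eq_Iic, ← Set.Iio_insert, iSup_insert]
  rfl

theorem disjoint_degreeLT (hg : iSupIndep g) (n : ℤ) : Disjoint (g n) (degreeLT g n) :=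
  hg.disjoint_biSup Set.self_notMem_Iio

theorem degreeLT_mono : Monotone (degreeLT g) :=
  fun _ _ h => biSup_mono fun _ hp => lt_of_lt_of_le hp h

theorem iSup_degreeLT : ⨆ n, degreeLT g n = ⨆ p, g p := by
  refine le_antisymm (iSup_le fun n => iSup₂_le fun p _ => le_iSup g p) (iSup_le fun p => ?_)
  exact (le_biSup g (Set.mem_Iio.2 (lt_add_one p))).trans (le_iSup (degreeLT g) _)

theorem exists_mem_degreeLT (hg : ⨆ p, g p = ⊤) (x : M) : ∃ n : ℕ, x ∈ degreeLT g n := by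
  have hx : x ∈ ⨆ n, degreeLT g n := by simp [iSup_degreeLT, hg]
  obtain ⟨n, hn⟩ := (mem_iSup_of_directed _ (degreeLT_mono g).directed_le).1 hx
  exact ⟨n.toNat, degreeLT_mono g (Int.self_le_toNat n) hn⟩

end Submodule

open Submodule

theorem lie_mem_degreeLT {R L : Type*} [CommRing R] [LieRing L] [LieAlgebra R L]
    {g : ℤ → Submodule R L} (hgr : ∀ p q : ℤ, ∀ x ∈ g p, ∀ y ∈ g q, ⁅x, y⁆ ∈ g (p + q))
    {n q : ℤ} {x y : L} (hx : x ∈ degreeLT g n) (hy : y ∈ g q) :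
    ⁅x, y⁆ ∈ degreeLT g (n + q) := by
  suffices degreeLT g n ≤ (degreeLT g (n + q)).comap (LieModule.toEnd R L L y) by
    rw [← lie_skew, neg_mem_iff]
    exact this hx
  refine iSup₂_le fun p hp z hz => ?_
  rw [mem_comap, LieModule.toEnd_apply_apply, ← lie_skew, neg_mem_iff]
  exact le_biSup g (Set.mem_Iio.2 (by simpa using hp)) (hgr p q z hz y hy)

theorem LieIdeal.disjoint_degreeLT_of_isTransitiveGLA {L : Type*} [LieRing L]
    [LieAlgebra ℝ L] {g : ℤ → Submodule ℝ L} (hg : IsGLA g) (htr : IsTransitiveGLA g)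
    (I : LieIdeal ℝ L) (h0 : Disjoint (I : Submodule ℝ L) (degreeLT g 0)) (n : ℕ) :
    Disjoint (I : Submodule ℝ L) (degreeLT g n) := by
  induction n with
  | zero => simpa using h0
  | succ n ih =>
    rw [disjoint_def] at ih ⊢
    intro x hxI hx
    have hbr : ∀ y ∈ g (-1), ⁅x, y⁆ = 0 := fun y hy =>
      ih _ (lie_mem_left ℝ L I x y hxI) (by simpa using lie_mem_degreeLT hg.2 hx hy)
    rw [Nat.cast_succ, degreeLT_add_one, mem_sup] at hx
    obtain ⟨z, hz, x', hx', rfl⟩ := hx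
    have hindep := DirectSum.IsInternal.submodule_iSupIndep hg.1
    have hz0 : z = 0 := htr n (Int.natCast_nonneg n) z hz fun y hy => by
      have hlie : ⁅z, y⁆ = -⁅x', y⁆ := by
        rw [eq_neg_iff_add_eq_zero, ← add_lie, hbr y hy]
      refine disjoint_def.1 (disjoint_degreeLT g hindep (n + -1)) _ (hg.2 _ _ z hz y hy) ?_
      rw [hlie, neg_mem_iff]
      exact lie_mem_degreeLT hg.2 hx' hy
    subst hz0
    rw [zero_add] at hxI ⊢
    exact ih x' hxI hx'

theorem LieIdeal.eq_bot_of_disjoint_degreeLT_zero {L : Type*} [LieRing L]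
    [LieAlgebra ℝ L] {g : ℤ → Submodule ℝ L} (hg : IsGLA g) (htr : IsTransitiveGLA g)
    (I : LieIdeal ℝ L) (h0 : Disjoint (I : Submodule ℝ L) (degreeLT g 0)) :
    I = ⊥ := by
  rw [eq_bot_iff]
  intro x hx
  obtain ⟨n, hn⟩ :=
    exists_mem_degreeLT g (DirectSum.IsInternal.submodule_iSup_eq_top hg.1) x
  exact disjoint_def.1 (I.disjoint_degreeLT_of_isTransitiveGLA hg htr h0 n) x hx hn

theorem semisimple_of_graded_semisimple_subalgebra_general
    {L : Type*} [LieRing L] [LieAlgebra ℝ L] [FiniteDimensional ℝ L]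
    (g : ℤ → Submodule ℝ L) (hg : IsGLA g) (htr : IsTransitiveGLA g)
    (l : LieSubalgebra ℝ L)
    (hneg : ∀ p : ℤ, p < 0 → (l : Submodule ℝ L) ⊓ g p = g p)
    (hss : LieAlgebra.IsSemisimple ℝ ↥l) :
    LieAlgebra.radical ℝ L = ⊥ := by
  refine LieIdeal.eq_bot_of_disjoint_degreeLT_zero hg htr _ ?_
  have hl : degreeLT g 0 ≤ l := iSup₂_le fun p hp => inf_eq_right.1 (hneg p hp)
  exact (l.disjoint_of_isSolvable (LieAlgebra.radical ℝ L)).symm.mono_right hl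

/-- Let `𝔤` be a finite-dimensional transitive GLA over `ℝ` and `𝔩` a
graded Lie subalgebra with `𝔩 ∩ 𝔤_p = 𝔤_p` for all `p < 0`. If `𝔩` is semisimple then
`𝔤` is semisimple: its radical is zero. -/
theorem semisimple_of_graded_semisimple_subalgebra
    {L : Type*} [LieRing L] [LieAlgebra ℝ L] [FiniteDimensional ℝ L]
    (g : ℤ → Submodule ℝ L) (hg : IsGLA g) (htr : IsTransitiveGLA g)
    (l : LieSubalgebra ℝ L)
    (hgraded : (l : Submodule ℝ L) = ⨆ p : ℤ, ((l : Submodule ℝ L) ⊓ g p))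
    (hneg : ∀ p : ℤ, p < 0 → (l : Submodule ℝ L) ⊓ g p = g p)
    (hss : LieAlgebra.IsSemisimple ℝ ↥l) :
    LieAlgebra.radical ℝ L = ⊥ :=
  semisimple_of_graded_semisimple_subalgebra_general g hg htr l hneg hss
end

section
/- Let L be a real Lie algebra and V a nonzero finite-dimensional L-module equipped with a nondegenerate symmetric bilinear form g such that for every a ∈ L there exists η_a ∈ ℝ with g(a·v,w) + g(v,a·w) = η_a·g(v,w) for all v,w ∈ V. Suppose V = V₁ ⊕ ⋯ ⊕ V_k, where the V_i are irreducible L-submodules that are pairwise non-isomorphic as L-modules, and suppose that for each i ∈ {1,…,k} there exists E_i ∈ L acting by E_i·v = −v for v ∈ V_i and E_i·v = 0 for v ∈ V_j with j ≠ i. Then either k = 1, or k = 2 with V₁ and V₂ totally isotropic for g and the restriction of g to V₁ × V₂ a nondegenerate pairing. -/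
/-!
Let `η i` be the conformal weight of `E i`. Comparing weights on `W j × W l`, where `E i` acts
by scalars, gives `(-2 - η i) B = 0` for `j = l = i`, `(-1 - η i) B = 0` when exactly one of
`j, l` is `i`, and `η i B = 0` when neither is. If `η i` vanished, the first two relations would
make the nonzero summand `W i` orthogonal to all of `V`; so `η i ≠ 0`, and `B (W j) (W l) = 0`
whenever some index differs from both `j` and `l`. With three summands, any summand would then
be orthogonal to all of `V`; with two, each summand is orthogonal to itself, and nondegeneracy
of `B` makes the pairing between them perfect.
-/

namespace LinearMap

theorem SeparatingLeft.eq_zero_of_forall_mem_apply_eq_zero {R M₁ M₂ P ι : Type*}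
    [CommSemiring R] [AddCommMonoid M₁] [Module R M₁] [AddCommMonoid M₂] [Module R M₂]
    [AddCommMonoid P] [Module R P] {B : M₁ →ₗ[R] M₂ →ₗ[R] P} (hB : B.SeparatingLeft)
    {N : ι → Submodule R M₂} (hN : ⨆ i, N i = ⊤) {x : M₁}
    (hx : ∀ i, ∀ y ∈ N i, B x y = 0) : x = 0 := by
  refine hB x fun y => ?_
  have hker : ⨆ i, N i ≤ ker (B x) := iSup_le fun i y hy => hx i y hy
  exact hker (hN ▸ Submodule.mem_top)

theorem SeparatingLeft.card_le_two {R M P ι : Type*} [CommSemiring R] [AddCommMonoid M]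
    [Module R M] [AddCommMonoid P] [Module R P] [Fintype ι] {B : M →ₗ[R] M →ₗ[R] P}
    (hB : B.SeparatingLeft) {N : ι → Submodule R M} (hN : ⨆ i, N i = ⊤) (hN0 : ∀ i, N i ≠ ⊥)
    (horth : ∀ i j l, j ≠ i → l ≠ i → ∀ v ∈ N j, ∀ w ∈ N l, B v w = 0) :
    Fintype.card ι ≤ 2 := by
  by_contra! h
  obtain ⟨a, b, c, hab, hac, hbc⟩ := Fintype.two_lt_card_iff.mp h
  obtain ⟨x, hx, hx0⟩ := Submodule.exists_mem_ne_zero_of_ne_bot (hN0 a)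
  refine hx0 (hB.eq_zero_of_forall_mem_apply_eq_zero hN fun n y hy => ?_)
  by_cases hnb : n = b
  · exact horth c a n hac (hnb ▸ hbc) x hx y hy
  · exact horth b a n hab hnb x hx y hy

end LinearMap

section ConformalAction

variable {K L M ι : Type*} [Field K] [LieRing L] [AddCommGroup M] [Module K M]
  [LieRingModule L M] {B : M →ₗ[K] M →ₗ[K] K}

theorem add_mul_apply_eq_of_lie_eq_smul {a : L} {η c d : K}
    (hη : ∀ v w, B ⁅a, v⁆ w + B v ⁅a, w⁆ = η * B v w) {v w : M}
    (hv : ⁅a, v⁆ = c • v) (hw : ⁅a, w⁆ = d • w) : (c + d) * B v w = η * B v w := by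
  rw [← hη, hv, hw, map_smul, LinearMap.smul_apply, map_smul, smul_eq_mul, smul_eq_mul, add_mul]

variable {N : ι → Submodule K M} {E : ι → L} {η : ι → K}

theorem conformalWeight_ne_zero [NeZero (2 : K)] (hB : B.SeparatingLeft) (hN : ⨆ i, N i = ⊤)
    (hE : ∀ i, (∀ v ∈ N i, ⁅E i, v⁆ = -v) ∧ ∀ j, j ≠ i → ∀ v ∈ N j, ⁅E i, v⁆ = 0)
    (hη : ∀ i v w, B ⁅E i, v⁆ w + B v ⁅E i, w⁆ = η i * B v w) {i : ι} (hi : N i ≠ ⊥) :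
    η i ≠ 0 := by
  intro hηi
  obtain ⟨x, hx, hx0⟩ := Submodule.exists_mem_ne_zero_of_ne_bot hi
  have hxi : ⁅E i, x⁆ = (-1 : K) • x := by rw [neg_one_smul]; exact (hE i).1 x hx
  refine hx0 (hB.eq_zero_of_forall_mem_apply_eq_zero hN fun j y hy => ?_)
  by_cases hji : j = i
  · subst hji
    have hyj : ⁅E j, y⁆ = (-1 : K) • y := by rw [neg_one_smul]; exact (hE j).1 y hy
    have h := add_mul_apply_eq_of_lie_eq_smul (hη j) hxi hyj
    rw [hηi, zero_mul, mul_eq_zero, ← neg_add, neg_eq_zero, one_add_one_eq_two] at h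
    exact h.resolve_left two_ne_zero
  · have hyj : ⁅E i, y⁆ = (0 : K) • y := by rw [zero_smul]; exact (hE i).2 j hji y hy
    have h := add_mul_apply_eq_of_lie_eq_smul (hη i) hxi hyj
    rwa [hηi, zero_mul, add_zero, neg_one_mul, neg_eq_zero] at h

theorem apply_eq_zero_of_ne_of_ne [NeZero (2 : K)] (hB : B.SeparatingLeft) (hN : ⨆ i, N i = ⊤)
    (hE : ∀ i, (∀ v ∈ N i, ⁅E i, v⁆ = -v) ∧ ∀ j, j ≠ i → ∀ v ∈ N j, ⁅E i, v⁆ = 0)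
    (hη : ∀ i v w, B ⁅E i, v⁆ w + B v ⁅E i, w⁆ = η i * B v w) {i j l : ι} (hi : N i ≠ ⊥)
    (hj : j ≠ i) (hl : l ≠ i) {v w : M} (hv : v ∈ N j) (hw : w ∈ N l) : B v w = 0 := by
  have hvi : ⁅E i, v⁆ = (0 : K) • v := by rw [zero_smul]; exact (hE i).2 j hj v hv
  have hwi : ⁅E i, w⁆ = (0 : K) • w := by rw [zero_smul]; exact (hE i).2 l hl w hw
  have h := add_mul_apply_eq_of_lie_eq_smul (hη i) hvi hwi
  rw [add_zero, zero_mul, eq_comm, mul_eq_zero] at h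
  exact h.resolve_left (conformalWeight_ne_zero hB hN hE hη hi)

end ConformalAction

theorem decomposition_of_conformal_module_general
    {L V : Type*} [LieRing L] [AddCommGroup V] [Module ℝ V] [LieRingModule L V] [Nontrivial V]
    (B : V →ₗ[ℝ] V →ₗ[ℝ] ℝ)
    (hBnd : ∀ x : V, (∀ y : V, B x y = 0) → x = 0)
    (hco : ∀ a : L, ∃ η : ℝ, ∀ v w : V, B ⁅a, v⁆ w + B v ⁅a, w⁆ = η * B v w)
    (k : ℕ) (W : Fin k → LieSubmodule ℝ L V)
    (hdec : DirectSum.IsInternal fun i : Fin k => (W i : Submodule ℝ V))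
    (hirr : ∀ i : Fin k, LieModule.IsIrreducible ℝ L ↥(W i))
    (E : Fin k → L)
    (hE : ∀ i : Fin k, (∀ v ∈ W i, ⁅E i, v⁆ = -v) ∧
      ∀ j : Fin k, j ≠ i → ∀ v ∈ W j, ⁅E i, v⁆ = 0) :
    k = 1 ∨ (k = 2 ∧ ∀ i j : Fin k, i ≠ j →
      (∀ x ∈ W i, ∀ y ∈ W i, B x y = 0) ∧
      (∀ x ∈ W i, (∀ y ∈ W j, B x y = 0) → x = 0)) := by
  choose η hη using fun i => hco (E i)
  have hN : ⨆ i, (W i : Submodule ℝ V) = ⊤ := hdec.submodule_iSup_eq_top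
  have hW : ∀ i, (W i : Submodule ℝ V) ≠ ⊥ := fun i =>
    Submodule.nontrivial_iff_ne_bot.mp (LieModule.nontrivial_of_isIrreducible ℝ L (W i))
  have horth : ∀ i j l, j ≠ i → l ≠ i → ∀ v ∈ W j, ∀ w ∈ W l, B v w = 0 :=
    fun i j l hj hl v hv w hw => apply_eq_zero_of_ne_of_ne hBnd hN hE hη (hW i) hj hl hv hw
  have hk : k ≤ 2 := by simpa using LinearMap.SeparatingLeft.card_le_two hBnd hN hW horth
  have hk0 : k ≠ 0 := by
    rintro rfl
    rw [iSup_of_empty] at hN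
    exact bot_ne_top hN
  obtain rfl | rfl : k = 1 ∨ k = 2 := by omega
  · exact Or.inl rfl
  refine Or.inr ⟨rfl, fun i j hij => ⟨horth j i i hij hij, fun x hx hxj => ?_⟩⟩
  refine LinearMap.SeparatingLeft.eq_zero_of_forall_mem_apply_eq_zero hBnd hN fun n y hy => ?_
  obtain rfl | rfl : n = i ∨ n = j := by omega
  · exact horth j n n hij hij x hx y hy
  · exact hxj y hy

/-- Let `L` be a real Lie algebra and `V` a nonzero finite-dimensional
`L`-module with a nondegenerate symmetric bilinear form `B` on which `L` acts conformally.
If `V` decomposes as a direct sum of pairwise non-isomorphic irreducible `L`-submodules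
`W 0, …, W (k-1)` and for each `i` there exists `E i ∈ L` acting by `-1` on `W i` and by
`0` on the other summands, then either `k = 1`, or `k = 2` with both summands totally
isotropic for `B` and `B` a nondegenerate pairing between them. -/
theorem decomposition_of_conformal_module
    {L V : Type*} [LieRing L] [LieAlgebra ℝ L]
    [AddCommGroup V] [Module ℝ V] [LieRingModule L V] [LieModule ℝ L V]
    [FiniteDimensional ℝ V] [Nontrivial V]
    (B : V →ₗ[ℝ] V →ₗ[ℝ] ℝ)
    (hBsymm : ∀ x y : V, B x y = B y x)
    (hBnd : ∀ x : V, (∀ y : V, B x y = 0) → x = 0)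
    (hco : ∀ a : L, ∃ η : ℝ, ∀ v w : V, B ⁅a, v⁆ w + B v ⁅a, w⁆ = η * B v w)
    (k : ℕ) (W : Fin k → LieSubmodule ℝ L V)
    (hdec : DirectSum.IsInternal fun i : Fin k => (W i : Submodule ℝ V))
    (hirr : ∀ i : Fin k, LieModule.IsIrreducible ℝ L ↥(W i))
    (hnoniso : ∀ i j : Fin k, i ≠ j → IsEmpty (↥(W i) ≃ₗ⁅ℝ,L⁆ ↥(W j)))
    (E : Fin k → L)
    (hE : ∀ i : Fin k, (∀ v ∈ W i, ⁅E i, v⁆ = -v) ∧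
      ∀ j : Fin k, j ≠ i → ∀ v ∈ W j, ⁅E i, v⁆ = 0) :
    k = 1 ∨ (k = 2 ∧ ∀ i j : Fin k, i ≠ j →
      (∀ x ∈ W i, ∀ y ∈ W i, B x y = 0) ∧
      (∀ x ∈ W i, (∀ y ∈ W j, B x y = 0) → x = 0)) :=
  decomposition_of_conformal_module_general B hBnd hco k W hdec hirr E hE
end

section
/- Fix an integer l ≥ 2 and set N = 2l + 1. Let K_m denote the m × m real matrix with (i,j) entry δ_{i,m+1−j} and let S be the N × N real symmetric matrix with block form [[0,0,K_l],[0,1,0],[K_l,0,0]] (blocks of sizes l, 1, l). Let 𝔤 = {X ∈ 𝔤𝔩(N,ℝ) : ᵗX S + S X = 0}. Partition {1,…,N} into I₁ = {1}, I₂ = {2,…,l}, I₃ = {l+1}, I₄ = {l+2,…,2l}, I₅ = {2l+1}, assign weights w(I₁) = 0, w(I₂) = −1, w(I₃) = −2, w(I₄) = −3, w(I₅) = −4, and for k ∈ ℤ let 𝔤_k = {X ∈ 𝔤 : X_{ab} = 0 whenever w(a) − w(b) ≠ k}. Then: (1) 𝔤 is the internal direct sum of the 𝔤_k, ⁅𝔤_j,𝔤_k⁆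 ⊆ 𝔤_{j+k}, and 𝔤_k = 0 for |k| > 3; (2) the negative part 𝔪 = 𝔤_{-3} ⊕ 𝔤_{-2} ⊕ 𝔤_{-1} is an FGLA of the third kind (𝔤_{-3} ≠ 0 and 𝔪 is generated by 𝔤_{-1}); (3) the bilinear form on 𝔤_{-1} defined by g(X,Y) = −(1/2)(X₃₂Y₂₁ + Y₃₂X₂₁), where X₂₁ is the I₂ × I₁ block (a column of length l−1) and X₃₂ is the I₃ × I₂ block (a row of length l−1) of X, is a nondegenerate symmetric real bilinear form of neutral signature (l−1, l−1); and (4) for every A ∈ 𝔤₀, writing A₁₁ for its (1,1) entry, one has g(⁅A,X⁆,Y) + g(X,⁅A,Y⁆) = −A₁₁·g(X,Y) for all X, Y ∈ 𝔤_{-1}; in particular ad(𝔤₀)|𝔤_{-1} ⊆ co(𝔤_{-1},g). -/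
/-!
Index from `0` and put `σ a = 2l - a`, so that `S` is the permutation matrix of `σ`: `𝔤` consists
of the matrices with `X (σ b) (σ a) = -X a b`, and the weights satisfy `w ∘ σ = -4 - w`. Hence
cutting a matrix down to the entries of one weight difference preserves `𝔤`, which gives the
grading, and the entries of weight difference `±4` lie on the antidiagonal `b = σ a`, where
elements of `𝔤` vanish. The matrices `E a b - E (σ b) (σ a)` span `𝔤` and have explicit brackets,
so each of negative degree is a bracket of ones of degree `-1`.

On `𝔤₋₁` the form is `g X Y = -½ (XY + YX)_{l,0}`. As `⁅A, ·⁆` is a derivation,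
`g ⁅A,X⁆ Y + g X ⁅A,Y⁆ = -½ ⁅A, XY + YX⁆_{l,0}`, and for `A ∈ 𝔤₀` the row `l` of `A` and the
column `0` of `A` off the diagonal vanish, which leaves `-A₀₀ g X Y`. An element of `𝔤₋₁` is
determined by its entries `X c 0` and `X l c` (`0 < c < l`), which are read off by pairing with
the vectors `(E c 0 - E 2l (2l-c)) ∓ (E l c - E (2l-c) l)`; these are `g`-orthonormal of sign `±1`,
which gives both the nondegeneracy and the signature.
-/

open Matrix

attribute [local instance 100] LieRing.ofAssociativeRing

noncomputable section

/-- The `(2l+1) × (2l+1)` symmetric matrix `S = S_{l,1}` with block form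
`[[0,0,K_l],[0,1,0],[K_l,0,0]]`, i.e. the matrix with ones on the antidiagonal. -/
def S18 (l : ℕ) : Matrix (Fin (2*l+1)) (Fin (2*l+1)) ℝ :=
  Matrix.of fun i j => if (i : ℕ) + (j : ℕ) = 2*l then 1 else 0

/-- The weights: `w(I₁) = 0, w(I₂) = -1, w(I₃) = -2, w(I₄) = -3, w(I₅) = -4` for the
partition `I₁ = {1}`, `I₂ = {2,…,l}`, `I₃ = {l+1}`, `I₄ = {l+2,…,2l}`, `I₅ = {2l+1}`. -/
def w18 (l : ℕ) (a : Fin (2*l+1)) : ℤ :=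
  if (a : ℕ) = 0 then 0
  else if (a : ℕ) < l then -1
  else if (a : ℕ) = l then -2
  else if (a : ℕ) < 2*l then -3
  else -4

/-- The real Lie algebra `𝔤 = 𝔰𝔬(l+1, l) = {X ∈ 𝔤𝔩(2l+1, ℝ) : ᵗX S + S X = 0}`. -/
def G18 (l : ℕ) : Submodule ℝ (Matrix (Fin (2*l+1)) (Fin (2*l+1)) ℝ) where
  carrier := {X | Xᵀ * S18 l + S18 l * X = 0}
  add_mem' := by
    rintro X Y hX hY
    simp only [Set.mem_setOf_eq] at *
    rw [Matrix.transpose_add, Matrix.add_mul, Matrix.mul_add]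
    have h1 : Xᵀ * S18 l = -(S18 l * X) := eq_neg_of_add_eq_zero_left hX
    have h2 : Yᵀ * S18 l = -(S18 l * Y) := eq_neg_of_add_eq_zero_left hY
    rw [h1, h2]; abel
  zero_mem' := by simp
  smul_mem' := by
    rintro c X hX
    simp only [Set.mem_setOf_eq] at *
    rw [Matrix.transpose_smul, Matrix.smul_mul, Matrix.mul_smul, ← smul_add, hX, smul_zero]

/-- The graded piece `𝔤_k`: matrices in `𝔤` supported where `w a - w b = k`. -/
def Gk18 (l : ℕ) (k : ℤ) : Submodule ℝ (Matrix (Fin (2*l+1)) (Fin (2*l+1)) ℝ) where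
  carrier := {X | X ∈ G18 l ∧ ∀ a b, w18 l a - w18 l b ≠ k → X a b = 0}
  add_mem' := by
    rintro X Y ⟨hX, hX2⟩ ⟨hY, hY2⟩
    exact ⟨(G18 l).add_mem hX hY,
      fun a b h => by simp [Matrix.add_apply, hX2 a b h, hY2 a b h]⟩
  zero_mem' := ⟨(G18 l).zero_mem, fun a b _ => rfl⟩
  smul_mem' := by
    rintro c X ⟨hX, hX2⟩
    exact ⟨(G18 l).smul_mem c hX,
      fun a b h => by simp [Matrix.smul_apply, hX2 a b h]⟩

/-- The bilinear form `g(X, Y) = -(1/2)(X₃₂ Y₂₁ + Y₃₂ X₂₁)` on `𝔤₋₁`. -/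
def g18 (l : ℕ) (X Y : Matrix (Fin (2*l+1)) (Fin (2*l+1)) ℝ) : ℝ :=
  -(1/2) * ∑ b : Fin (2*l+1),
    if 0 < (b : ℕ) ∧ (b : ℕ) < l then
      X ⟨l, by omega⟩ b * Y b ⟨0, by omega⟩ + Y ⟨l, by omega⟩ b * X b ⟨0, by omega⟩
    else 0

section SkewSingle

variable {n R : Type*} [CommRing R] {σ : n → n}

variable (σ) in
def IsSkewWrt (X : Matrix n n R) : Prop := ∀ a b, X (σ b) (σ a) = -X a b

lemma IsSkewWrt.apply_antidiag_eq_zero [NoZeroDivisors R] [CharZero R] (hσ : Function.Involutive σ)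
    {X : Matrix n n R} (hX : IsSkewWrt σ X) (a : n) : X a (σ a) = 0 := by
  have := hX a (σ a)
  rwa [hσ, CharZero.eq_neg_self_iff] at this

variable [DecidableEq n]

variable (R σ) in
def skewSingle (a b : n) : Matrix n n R := single a b 1 - single (σ b) (σ a) 1

lemma skewSingle_apply (a b i j : n) :
    skewSingle R σ a b i j =
      (if a = i ∧ b = j then 1 else 0) - (if σ b = i ∧ σ a = j then 1 else 0) := rfl

lemma isSkewWrt_skewSingle (hσ : Function.Involutive σ) (a b : n) :
    IsSkewWrt σ (skewSingle R σ a b) := by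
  intro i j
  have e (x y : n) : x = σ y ↔ σ x = y := ⟨fun h => h ▸ hσ y, fun h => h ▸ (hσ x).symm⟩
  simp only [skewSingle_apply, hσ.injective.eq_iff, e, and_comm, neg_sub]

lemma skewSingle_swap (hσ : Function.Involutive σ) (a b : n) :
    skewSingle R σ (σ b) (σ a) = -skewSingle R σ a b := by
  rw [skewSingle, skewSingle, hσ, hσ, neg_sub]

lemma skewSingle_antidiag_eq_zero (hσ : Function.Involutive σ) (a : n) :
    skewSingle R σ a (σ a) = 0 := by
  rw [skewSingle, hσ, sub_self]

lemma skewSingle_apply_same [Nontrivial R] {a b : n} (h : b ≠ σ a) :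
    skewSingle R σ a b a b = 1 := by
  simpa [skewSingle_apply] using fun _ e => h e.symm

lemma IsSkewWrt.sum_smul_skewSingle [Fintype n] (hσ : Function.Involutive σ)
    {X : Matrix n n R} (hX : IsSkewWrt σ X) :
    ∑ a, ∑ b, X a b • skewSingle R σ a b = (2 : R) • X := by
  ext i j
  simp only [Matrix.sum_apply, Matrix.smul_apply, skewSingle_apply, ite_and, hσ.eq_iff,
    smul_eq_mul, mul_sub, mul_ite, mul_one, mul_zero, Finset.sum_sub_distrib,
    Finset.sum_ite_irrel, Finset.sum_ite_eq', Finset.mem_univ, ↓reduceIte, Finset.sum_const_zero]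
  rw [hX, two_mul, sub_neg_eq_add]

lemma single_one_mul_single_one [Fintype n] (a b c d : n) :
    (single a b 1 * single c d 1 : Matrix n n R) = if b = c then single a d 1 else 0 := by
  split_ifs with h
  · rw [h, single_mul_single_same, mul_one]
  · exact single_mul_single_of_ne _ _ _ _ h _

lemma lie_skewSingle [Fintype n] (hσ : Function.Involutive σ) (a b c d : n) :
    ⁅skewSingle R σ a b, skewSingle R σ c d⁆ =
      (if b = c then skewSingle R σ a d else 0) - (if a = d then skewSingle R σ c b else 0)
      - (if b = σ d then skewSingle R σ a (σ c) else 0)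
      - (if σ a = c then skewSingle R σ (σ b) d else 0) := by
  simp only [Ring.lie_def, skewSingle, sub_mul, mul_sub, single_one_mul_single_one,
    hσ.injective.eq_iff, hσ.eq_iff, hσ _]
  split_ifs <;> subst_vars <;> simp -failIfUnchanged only [hσ _, not_true_eq_false] at * <;>
    abel_nf

end SkewSingle

section WeightShell

variable {n R : Type*} [CommRing R] (w : n → ℤ)

def weightShell (k : ℤ) : Submodule R (Matrix n n R) where
  carrier := {X | ∀ a b, w a - w b ≠ k → X a b = 0}
  add_mem' hX hY a b h := by rw [Matrix.add_apply, hX a b h, hY a b h, add_zero]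
  zero_mem' _ _ _ := rfl
  smul_mem' c _ hX a b h := by rw [Matrix.smul_apply, hX a b h, smul_zero]

def shellProj (k : ℤ) : Matrix n n R →ₗ[R] Matrix n n R where
  toFun X := of fun a b => if w a - w b = k then X a b else 0
  map_add' X Y := by ext a b; simp only [of_apply, Matrix.add_apply]; split_ifs <;> simp
  map_smul' c X := by ext a b; simp only [of_apply, Matrix.smul_apply]; split_ifs <;> simp

variable {w}

lemma shellProj_apply (k : ℤ) (X : Matrix n n R) (a b : n) :
    shellProj w k X a b = if w a - w b = k then X a b else 0 := rfl

lemma shellProj_mem (k : ℤ) (X : Matrix n n R) : shellProj w k X ∈ weightShell w k :=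
  fun _ _ h => if_neg h

lemma shellProj_of_mem {j k : ℤ} {X : Matrix n n R} (hX : X ∈ weightShell w j) :
    shellProj w k X = if j = k then X else 0 := by
  ext a b
  by_cases hab : w a - w b = j
  · subst hab
    split_ifs <;> simp [shellProj_apply, *]
  · split_ifs <;> simp [shellProj_apply, hX a b hab]

lemma sum_shellProj [Fintype n] (X : Matrix n n R) :
    ∑ k ∈ Finset.univ.image (fun p : n × n => w p.1 - w p.2), shellProj w k X = X := by
  ext a b
  rw [Matrix.sum_apply]
  simp only [shellProj_apply]
  rw [Finset.sum_ite_eq, if_pos (Finset.mem_image_of_mem _ (Finset.mem_univ (a, b)))]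

theorem isInternal_comap_inf_weightShell [Fintype n] (G : Submodule R (Matrix n n R))
    (hG : ∀ k, ∀ X ∈ G, shellProj w k X ∈ G) :
    DirectSum.IsInternal fun k => (G ⊓ weightShell w k).comap G.subtype := by
  apply DirectSum.isInternal_submodule_of_iSupIndep_of_iSup_eq_top
  · refine iSupIndep_def.2 fun i => Submodule.disjoint_def.2 fun x hxi hx => ?_
    have hker : (⨆ j, ⨆ (_ : j ≠ i), (G ⊓ weightShell w j).comap G.subtype) ≤
        LinearMap.ker (shellProj w i ∘ₗ G.subtype) := by
      refine iSup₂_le fun j hj y hy => LinearMap.mem_ker.2 ?_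
      have hy' : (y : Matrix n n R) ∈ weightShell w j := hy.2
      rw [LinearMap.comp_apply, Submodule.subtype_apply, shellProj_of_mem hy', if_neg hj]
    have hxi' : (x : Matrix n n R) ∈ weightShell w i := hxi.2
    have := LinearMap.mem_ker.1 (hker hx)
    rwa [LinearMap.comp_apply, Submodule.subtype_apply, shellProj_of_mem hxi', if_pos rfl,
      ZeroMemClass.coe_eq_zero] at this
  · refine eq_top_iff.2 fun x _ => ?_
    have hx : x = ∑ k ∈ Finset.univ.image (fun p : n × n => w p.1 - w p.2),
        ⟨shellProj w k x, hG k x x.2⟩ := Subtype.ext (by simp [sum_shellProj])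
    rw [hx]
    exact Submodule.sum_mem _ fun k _ =>
      Submodule.mem_iSup_of_mem k ⟨hG k x x.2, shellProj_mem (w := w) k (x : Matrix n n R)⟩

lemma mul_mem_weightShell [Fintype n] {j k : ℤ} {X Y : Matrix n n R}
    (hX : X ∈ weightShell w j) (hY : Y ∈ weightShell w k) : X * Y ∈ weightShell w (j + k) := by
  intro a b h
  rw [mul_apply]
  refine Finset.sum_eq_zero fun c _ => ?_
  by_cases hac : w a - w c = j
  · rw [hY c b (by omega), mul_zero]
  · rw [hX a c hac, zero_mul]

variable {σ : n → n} {c : ℤ}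

lemma IsSkewWrt.shellProj (hw : ∀ a, w (σ a) = c - w a) {X : Matrix n n R}
    (hX : IsSkewWrt σ X) (k : ℤ) : IsSkewWrt σ (shellProj w k X) := by
  intro a b
  simp only [shellProj_apply, hw, sub_sub_sub_cancel_left, hX a b]
  split_ifs <;> simp

lemma skewSingle_mem_weightShell [DecidableEq n] (hw : ∀ a, w (σ a) = c - w a) (a b : n) :
    skewSingle R σ a b ∈ weightShell w (w a - w b) := by
  intro i j h
  rw [skewSingle_apply, if_neg, if_neg, sub_zero]
  · rintro ⟨rfl, rfl⟩
    exact h (by rw [hw, hw]; ring)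
  · rintro ⟨rfl, rfl⟩
    exact h rfl

end WeightShell

theorem LinearMap.BilinForm.sum_smul_sum_smul_of_orthogonal {R M ι : Type*} [CommRing R]
    [AddCommGroup M] [Module R M] [Fintype ι] [DecidableEq ι] (B : LinearMap.BilinForm R M)
    {v u : ι → M} {s : R} (h : ∀ i j, B (v i) (u j) = if i = j then s else 0) (f g : ι → R) :
    B (∑ i, f i • v i) (∑ j, g j • u j) = s * ∑ i, f i * g i := by
  simp [map_sum, h, Finset.mul_sum, mul_comm, mul_left_comm]

section Orthonormal

variable {M ι : Type*} [AddCommGroup M] [Module ℝ M] [DecidableEq ι]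
  {B : LinearMap.BilinForm ℝ M} {v : ι → M}

theorem LinearMap.BilinForm.linearIndependent_of_orthonormal
    (h : ∀ i j, B (v i) (v j) = if i = j then 1 else 0) : LinearIndependent ℝ v :=
  linearIndependent_of_iIsOrtho (fun i j hij => (h i j).trans (if_neg hij))
    fun i => by rw [h, if_pos rfl]; exact one_ne_zero

theorem LinearMap.BilinForm.apply_self_pos_of_mem_span [Fintype ι]
    (h : ∀ i j, B (v i) (v j) = if i = j then 1 else 0) {x : M}
    (hx : x ∈ Submodule.span ℝ (Set.range v)) (hx0 : x ≠ 0) : 0 < B x x := by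
  obtain ⟨f, rfl⟩ := (Submodule.mem_span_range_iff_exists_fun ℝ).1 hx
  rw [B.sum_smul_sum_smul_of_orthogonal h, one_mul]
  refine lt_of_le_of_ne (Finset.sum_nonneg fun i _ => mul_self_nonneg (f i)) fun h0 => hx0 ?_
  simp [(Finset.sum_mul_self_eq_zero_iff _ _).1 h0.symm]

end Orthonormal

section Weights

variable {l : ℕ}

def mid (l : ℕ) : Fin (2*l+1) := ⟨l, by omega⟩

lemma mid_val : (mid l : ℕ) = l := rfl

lemma rev_mid : (mid l).rev = mid l := by
  ext
  simp only [mid, Fin.val_rev]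
  omega

@[simp] lemma w18_zero : w18 l 0 = 0 := rfl

lemma mid_ne_zero (hl : 1 ≤ l) : mid l ≠ 0 :=
  Fin.ne_of_val_ne (show l ≠ 0 by omega)

lemma w18_rev (hl : 1 ≤ l) (a : Fin (2*l+1)) : w18 l a.rev = -4 - w18 l a := by
  simp only [w18, Fin.val_rev]
  grind

lemma w18_mem_Icc (a : Fin (2*l+1)) : w18 l a ∈ Set.Icc (-4) 0 := by
  rw [Set.mem_Icc, w18]
  grind

lemma w18_eq_zero_iff {a : Fin (2*l+1)} : w18 l a = 0 ↔ a = 0 := by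
  rw [Fin.ext_iff, Fin.val_zero, w18]
  grind

lemma w18_eq_neg_one_iff {a : Fin (2*l+1)} : w18 l a = -1 ↔ 0 < (a : ℕ) ∧ (a : ℕ) < l := by
  rw [w18]
  grind

lemma w18_eq_neg_two_iff (hl : 1 ≤ l) {a : Fin (2*l+1)} : w18 l a = -2 ↔ a = mid l := by
  rw [Fin.ext_iff, mid, w18]
  grind

lemma w18_mid (hl : 1 ≤ l) : w18 l (mid l) = -2 := (w18_eq_neg_two_iff hl).2 rfl

lemma w18_eq_neg_four_iff (hl : 1 ≤ l) {a : Fin (2*l+1)} : w18 l a = -4 ↔ a = Fin.rev 0 := by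
  rw [Fin.ext_iff, Fin.val_rev, Fin.val_zero, w18]
  grind

lemma eq_rev_of_three_lt_abs_w18_sub {a b : Fin (2*l+1)} (h : 3 < |w18 l a - w18 l b|) :
    b = a.rev := by
  rw [lt_abs] at h
  simp only [w18] at h
  rw [Fin.ext_iff, Fin.val_rev]
  grind

end Weights

section Grading

variable {l : ℕ}

lemma S18_eq_toMatrix_revPerm :
    S18 l = (Fin.revPerm : Equiv.Perm (Fin (2*l+1))).toPEquiv.toMatrix := by
  ext i j
  simp only [S18, of_apply, PEquiv.toMatrix_apply, Equiv.toPEquiv_apply, Fin.revPerm_apply,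
    Option.mem_def, Option.some.injEq, Fin.ext_iff, Fin.val_rev]
  grind

lemma mem_G18_iff {X : Matrix (Fin (2*l+1)) (Fin (2*l+1)) ℝ} :
    X ∈ G18 l ↔ IsSkewWrt Fin.rev X := by
  change Xᵀ * S18 l + S18 l * X = 0 ↔ _
  rw [S18_eq_toMatrix_revPerm, PEquiv.mul_toMatrix_toPEquiv, PEquiv.toMatrix_toPEquiv_mul,
    ← Matrix.ext_iff]
  simp only [Fin.revPerm_symm, Matrix.add_apply, submatrix_apply, id_eq, Fin.revPerm_apply,
    transpose_apply, Matrix.zero_apply, add_eq_zero_iff_eq_neg, IsSkewWrt]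
  exact ⟨fun h a b => by simpa using h a.rev b, fun h i j => by simpa using h i.rev j⟩

lemma G18_eq_skewAdjointMatricesSubmodule : G18 l = skewAdjointMatricesSubmodule (S18 l) := by
  ext X
  rw [mem_skewAdjointMatricesSubmodule]
  change Xᵀ * S18 l + S18 l * X = 0 ↔ Xᵀ * S18 l = S18 l * -X
  rw [Matrix.mul_neg, add_eq_zero_iff_eq_neg]

lemma Gk18_eq_inf (k : ℤ) : Gk18 l k = G18 l ⊓ weightShell (w18 l) k := rfl

theorem isInternal_Gk18 (hl : 1 ≤ l) :
    DirectSum.IsInternal fun k => (Gk18 l k).comap (G18 l).subtype := by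
  simp only [Gk18_eq_inf]
  exact isInternal_comap_inf_weightShell _ fun k _ hX =>
    mem_G18_iff.2 ((mem_G18_iff.1 hX).shellProj (w18_rev hl) k)

theorem lie_mem_Gk18 {j k : ℤ} {X Y : Matrix (Fin (2*l+1)) (Fin (2*l+1)) ℝ}
    (hX : X ∈ Gk18 l j) (hY : Y ∈ Gk18 l k) : ⁅X, Y⁆ ∈ Gk18 l (j + k) := by
  obtain ⟨hXG, hXw⟩ := hX
  obtain ⟨hYG, hYw⟩ := hY
  refine ⟨?_, ?_⟩
  · rw [G18_eq_skewAdjointMatricesSubmodule] at hXG hYG ⊢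
    exact (S18 l).isSkewAdjoint_bracket hXG hYG
  · rw [Ring.lie_def]
    exact sub_mem (mul_mem_weightShell hXw hYw) (add_comm j k ▸ mul_mem_weightShell hYw hXw)

theorem Gk18_eq_bot {k : ℤ} (hk : 3 < |k|) : Gk18 l k = ⊥ := by
  refine eq_bot_iff.2 fun X hX => (Submodule.mem_bot ℝ).2 ?_
  ext a b
  by_cases h : w18 l a - w18 l b = k
  · have hb : b = a.rev := eq_rev_of_three_lt_abs_w18_sub (by rwa [h])
    rw [hb]
    exact (mem_G18_iff.1 hX.1).apply_antidiag_eq_zero Fin.rev_involutive a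
  · exact hX.2 a b h

lemma skewSingle_mem_Gk18 (hl : 1 ≤ l) (a b : Fin (2*l+1)) :
    skewSingle ℝ Fin.rev a b ∈ Gk18 l (w18 l a - w18 l b) :=
  ⟨mem_G18_iff.2 (isSkewWrt_skewSingle Fin.rev_involutive a b),
    skewSingle_mem_weightShell (w18_rev hl) a b⟩

end Grading

section Generation

variable {l : ℕ}

lemma lie_skewSingle_mid_zero (hl : 1 ≤ l) {c : Fin (2*l+1)} (hc : c ≠ mid l)
    (hc' : c ≠ Fin.rev 0) :
    ⁅skewSingle ℝ Fin.rev (mid l) c, skewSingle ℝ Fin.rev c 0⁆ =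
      skewSingle ℝ Fin.rev (mid l) 0 := by
  rw [lie_skewSingle Fin.rev_involutive, if_pos rfl, if_neg (mid_ne_zero hl), if_neg hc', rev_mid,
    if_neg hc.symm]
  simp

lemma lie_skewSingle_mid_mid {a b : Fin (2*l+1)} (ha : a ≠ mid l) (hb : b ≠ mid l) (hab : b ≠ a) :
    ⁅skewSingle ℝ Fin.rev (mid l) b, skewSingle ℝ Fin.rev (mid l) a.rev⁆ =
      skewSingle ℝ Fin.rev a b := by
  have ha' : mid l ≠ a.rev := by rwa [ne_comm, ← rev_mid, Fin.rev_inj.ne]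
  rw [lie_skewSingle Fin.rev_involutive, if_neg hb, if_neg ha', Fin.rev_rev, if_neg hab, rev_mid,
    if_pos rfl, skewSingle_swap Fin.rev_involutive]
  simp

abbrev negOneSpan (l : ℕ) : LieSubalgebra ℝ (Matrix (Fin (2*l+1)) (Fin (2*l+1)) ℝ) :=
  LieSubalgebra.lieSpan ℝ _ (Gk18 l (-1) : Set (Matrix (Fin (2*l+1)) (Fin (2*l+1)) ℝ))

lemma skewSingle_mem_negOneSpan_of_sub_eq (hl : 1 ≤ l) {a b : Fin (2*l+1)}
    (h : w18 l a - w18 l b = -1) : skewSingle ℝ Fin.rev a b ∈ negOneSpan l :=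
  LieSubalgebra.subset_lieSpan (h ▸ skewSingle_mem_Gk18 hl a b)

lemma skewSingle_mid_mem_negOneSpan (hl : 2 ≤ l) {b : Fin (2*l+1)} (hb : -1 ≤ w18 l b) :
    skewSingle ℝ Fin.rev (mid l) b ∈ negOneSpan l := by
  have hl1 : 1 ≤ l := by omega
  have hwmid := w18_mid hl1
  rcases (show w18 l b = 0 ∨ w18 l b = -1 by obtain ⟨_, _⟩ := w18_mem_Icc b; omega) with hb | hb
  · let c : Fin (2*l+1) := ⟨1, by omega⟩
    have hc : w18 l c = -1 := w18_eq_neg_one_iff.2 ⟨Nat.one_pos, hl⟩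
    rw [w18_eq_zero_iff.1 hb, ← lie_skewSingle_mid_zero hl1 (c := c)
      (ne_of_apply_ne (w18 l) (by omega))
      (ne_of_apply_ne (w18 l) (by rw [w18_rev hl1, w18_zero]; omega))]
    exact (negOneSpan l).lie_mem (skewSingle_mem_negOneSpan_of_sub_eq hl1 (by omega))
      (skewSingle_mem_negOneSpan_of_sub_eq hl1 (by rw [hc, w18_zero]; rfl))
  · exact skewSingle_mem_negOneSpan_of_sub_eq hl1 (by omega)

lemma skewSingle_mem_negOneSpan_of_eq_neg_three (hl : 2 ≤ l) {a b : Fin (2*l+1)}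
    (ha : w18 l a = -3) (hb : -1 ≤ w18 l b) : skewSingle ℝ Fin.rev a b ∈ negOneSpan l := by
  have hl1 : 1 ≤ l := by omega
  have hwmid := w18_mid hl1
  rw [← lie_skewSingle_mid_mid (ne_of_apply_ne (w18 l) (by omega))
    (ne_of_apply_ne (w18 l) (by omega)) (ne_of_apply_ne (w18 l) (by omega))]
  exact (negOneSpan l).lie_mem (skewSingle_mid_mem_negOneSpan hl hb)
    (skewSingle_mem_negOneSpan_of_sub_eq hl1 (by rw [w18_rev hl1]; omega))

lemma skewSingle_mem_negOneSpan_of_neg_one_le (hl : 2 ≤ l) {a b : Fin (2*l+1)}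
    (hab : w18 l a < w18 l b) (hb : -1 ≤ w18 l b) : skewSingle ℝ Fin.rev a b ∈ negOneSpan l := by
  have hl1 : 1 ≤ l := by omega
  obtain ⟨_, _⟩ := w18_mem_Icc a
  obtain ⟨_, _⟩ := w18_mem_Icc b
  rcases (show w18 l a = -4 ∨ w18 l a = -3 ∨ w18 l a = -2 ∨ -1 ≤ w18 l a by omega)
    with ha | ha | ha | ha
  · obtain rfl := (w18_eq_neg_four_iff hl1).1 ha
    rcases (show w18 l b = 0 ∨ w18 l b = -1 by omega) with hb | hb
    · have h := skewSingle_antidiag_eq_zero (R := ℝ) Fin.rev_involutive (Fin.rev (0 : Fin (2*l+1)))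
      rw [Fin.rev_rev] at h
      rw [w18_eq_zero_iff.1 hb, h]
      exact zero_mem _
    · rw [← Fin.rev_rev b, skewSingle_swap Fin.rev_involutive]
      exact neg_mem (skewSingle_mem_negOneSpan_of_eq_neg_three hl
        (by rw [w18_rev hl1]; omega) (by rw [w18_zero]; omega))
  · exact skewSingle_mem_negOneSpan_of_eq_neg_three hl ha hb
  · rw [(w18_eq_neg_two_iff hl1).1 ha]
    exact skewSingle_mid_mem_negOneSpan hl hb
  · exact skewSingle_mem_negOneSpan_of_sub_eq hl1 (by omega)

lemma skewSingle_mem_negOneSpan (hl : 2 ≤ l) {a b : Fin (2*l+1)} (hab : w18 l a < w18 l b) :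
    skewSingle ℝ Fin.rev a b ∈ negOneSpan l := by
  have hl1 : 1 ≤ l := by omega
  by_cases hb : -1 ≤ w18 l b
  · exact skewSingle_mem_negOneSpan_of_neg_one_le hl hab hb
  · -- `skewSingle (rev b) (rev a) = -skewSingle a b`, and `w ∘ rev = -4 - w` makes `-1 ≤ w (rev a)`
    rw [← neg_neg (skewSingle ℝ Fin.rev a b), ← skewSingle_swap Fin.rev_involutive]
    obtain ⟨_, _⟩ := w18_mem_Icc a
    exact neg_mem (skewSingle_mem_negOneSpan_of_neg_one_le hl
      (by rw [w18_rev hl1, w18_rev hl1]; omega) (by rw [w18_rev hl1]; omega))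

theorem Gk18_subset_negOneSpan (hl : 2 ≤ l) {p : ℤ} (hp : p < 0) :
    (Gk18 l p : Set (Matrix (Fin (2*l+1)) (Fin (2*l+1)) ℝ)) ⊆ negOneSpan l := by
  intro X hX
  rw [SetLike.mem_coe, ← inv_smul_smul₀ (two_ne_zero (α := ℝ)) X,
    ← (mem_G18_iff.1 hX.1).sum_smul_skewSingle Fin.rev_involutive]
  refine SMulMemClass.smul_mem _ (sum_mem fun a _ => sum_mem fun b _ => ?_)
  by_cases h : w18 l a - w18 l b = p
  · exact SMulMemClass.smul_mem _ (skewSingle_mem_negOneSpan hl (by omega))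
  · rw [hX.2 a b h, zero_smul]
    exact zero_mem _

theorem Gk18_neg_three_ne_bot (hl : 2 ≤ l) : Gk18 l (-3) ≠ ⊥ := by
  have hl1 : 1 ≤ l := by omega
  set a : Fin (2*l+1) := Fin.rev ⟨1, by omega⟩
  have ha : w18 l a = -3 := by
    rw [w18_rev hl1, w18_eq_neg_one_iff.2 ⟨Nat.one_pos, hl⟩]
    norm_num
  refine (Submodule.ne_bot_iff _).2 ⟨skewSingle ℝ Fin.rev a 0, ?_, fun h => ?_⟩
  · simpa [ha] using skewSingle_mem_Gk18 hl1 a 0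
  · have h0 : (0 : Fin (2*l+1)) ≠ a.rev := ne_of_apply_ne (w18 l) (by
      rw [w18_rev hl1, ha, w18_zero]; norm_num)
    simpa [skewSingle_apply_same h0] using congrFun (congrFun h a) 0

end Generation

section Form

variable {l : ℕ}

lemma g18_def (X Y : Matrix (Fin (2*l+1)) (Fin (2*l+1)) ℝ) :
    g18 l X Y = -(1/2) * ∑ b : Fin (2*l+1), if 0 < (b : ℕ) ∧ (b : ℕ) < l then
      X (mid l) b * Y b 0 + Y (mid l) b * X b 0 else 0 := rfl

lemma g18_add_left (X Y Z : Matrix (Fin (2*l+1)) (Fin (2*l+1)) ℝ) :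
    g18 l (X + Y) Z = g18 l X Z + g18 l Y Z := by
  simp only [g18_def, ← mul_add, ← Finset.sum_add_distrib, Matrix.add_apply]
  congr 1
  refine Finset.sum_congr rfl fun b _ => ?_
  split_ifs <;> ring

lemma g18_smul_left (c : ℝ) (X Y : Matrix (Fin (2*l+1)) (Fin (2*l+1)) ℝ) :
    g18 l (c • X) Y = c * g18 l X Y := by
  simp only [g18_def, Finset.mul_sum, Matrix.smul_apply, smul_eq_mul]
  refine Finset.sum_congr rfl fun b _ => ?_
  split_ifs <;> ring

lemma g18_comm (X Y : Matrix (Fin (2*l+1)) (Fin (2*l+1)) ℝ) : g18 l X Y = g18 l Y X := by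
  simp only [g18_def]
  congr 1
  exact Finset.sum_congr rfl fun b _ => by split_ifs <;> ring

def gForm (l : ℕ) : LinearMap.BilinForm ℝ (Matrix (Fin (2*l+1)) (Fin (2*l+1)) ℝ) :=
  LinearMap.mk₂ ℝ (g18 l) g18_add_left g18_smul_left
    (fun X Y Z => by rw [g18_comm, g18_add_left, g18_comm Y, g18_comm Z])
    (fun c X Y => by rw [g18_comm, g18_smul_left, g18_comm, smul_eq_mul])

lemma gForm_apply (X Y : Matrix (Fin (2*l+1)) (Fin (2*l+1)) ℝ) : gForm l X Y = g18 l X Y := rfl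

def idxI2 (l : ℕ) (c : Fin (l-1)) : Fin (2*l+1) := ⟨c + 1, by omega⟩

lemma idxI2_val (c : Fin (l-1)) : (idxI2 l c : ℕ) = c + 1 := rfl

lemma idxI2_injective : Function.Injective (idxI2 l) := fun c d h => by
  simpa [idxI2, Fin.ext_iff] using h

lemma w18_idxI2 (c : Fin (l-1)) : w18 l (idxI2 l c) = -1 :=
  w18_eq_neg_one_iff.2 ⟨Nat.succ_pos _, by rw [idxI2_val]; omega⟩

lemma exists_idxI2_eq {b : Fin (2*l+1)} (hb : w18 l b = -1) : ∃ c, idxI2 l c = b := by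
  obtain ⟨h0, hl⟩ := w18_eq_neg_one_iff.1 hb
  exact ⟨⟨b - 1, by omega⟩, Fin.ext (by rw [idxI2_val, Fin.val_mk]; omega)⟩

def orthVec (l : ℕ) (ε : ℝ) (c : Fin (l-1)) : Matrix (Fin (2*l+1)) (Fin (2*l+1)) ℝ :=
  skewSingle ℝ Fin.rev (idxI2 l c) 0 + ε • skewSingle ℝ Fin.rev (mid l) (idxI2 l c)

lemma orthVec_mem (hl : 1 ≤ l) (ε : ℝ) (c : Fin (l-1)) : orthVec l ε c ∈ Gk18 l (-1) := by
  have h1 := skewSingle_mem_Gk18 hl (idxI2 l c) 0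
  have h2 := skewSingle_mem_Gk18 hl (mid l) (idxI2 l c)
  rw [w18_idxI2, w18_zero] at h1
  rw [w18_idxI2, w18_mid hl] at h2
  exact add_mem h1 (Submodule.smul_mem _ ε h2)

lemma orthVec_apply_zero (ε : ℝ) (c : Fin (l-1)) (b : Fin (2*l+1)) :
    orthVec l ε c b 0 = if b = idxI2 l c then 1 else 0 := by
  have := c.isLt
  simp only [orthVec, Matrix.add_apply, Matrix.smul_apply, skewSingle_apply, Fin.ext_iff,
    Fin.val_rev, idxI2_val, mid_val, Fin.val_zero, smul_eq_mul]
  grind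

lemma orthVec_apply_mid (ε : ℝ) (c : Fin (l-1)) (b : Fin (2*l+1)) :
    orthVec l ε c (mid l) b = if b = idxI2 l c then ε else 0 := by
  have := c.isLt
  simp only [orthVec, Matrix.add_apply, Matrix.smul_apply, skewSingle_apply, Fin.ext_iff,
    Fin.val_rev, idxI2_val, mid_val, Fin.val_zero, smul_eq_mul]
  grind

lemma g18_orthVec (X : Matrix (Fin (2*l+1)) (Fin (2*l+1)) ℝ) (ε : ℝ) (d : Fin (l-1)) :
    g18 l X (orthVec l ε d) = -(1/2) * (X (mid l) (idxI2 l d) + ε * X (idxI2 l d) 0) := by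
  rw [g18_def, Finset.sum_eq_single (idxI2 l d)]
  · have := d.isLt
    rw [if_pos (by rw [idxI2_val]; omega), orthVec_apply_zero, orthVec_apply_mid, if_pos rfl,
      if_pos rfl]
    ring
  · intro b _ hb
    simp [orthVec_apply_zero, orthVec_apply_mid, hb]
  · simp

lemma gForm_orthVec_orthVec (ε ε' : ℝ) (c d : Fin (l-1)) :
    gForm l (orthVec l ε c) (orthVec l ε' d) = if c = d then -(ε + ε') / 2 else 0 := by
  rw [gForm_apply, g18_orthVec, orthVec_apply_zero, orthVec_apply_mid]
  by_cases h : c = d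
  · simp only [h, if_true]
    ring
  · simp only [h, idxI2_injective.ne (Ne.symm h), if_false]
    ring

lemma eq_zero_of_mem_Gk18_neg_one_of_coords (hl : 1 ≤ l) {X : Matrix (Fin (2*l+1)) (Fin (2*l+1)) ℝ}
    (hX : X ∈ Gk18 l (-1)) (h0 : ∀ d, X (idxI2 l d) 0 = 0)
    (hmid : ∀ d, X (mid l) (idxI2 l d) = 0) : X = 0 := by
  have key {a b : Fin (2*l+1)} (hab : w18 l a - w18 l b = -1) (hb : -1 ≤ w18 l b) :
      X a b = 0 := by
    obtain ⟨_, _⟩ := w18_mem_Icc b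
    rcases (show w18 l b = 0 ∨ w18 l b = -1 by omega) with hb | hb
    · obtain ⟨d, rfl⟩ := exists_idxI2_eq (b := a) (by omega)
      rw [w18_eq_zero_iff.1 hb, h0]
    · rw [(w18_eq_neg_two_iff hl (a := a)).1 (by omega)]
      obtain ⟨d, rfl⟩ := exists_idxI2_eq hb
      exact hmid d
  ext a b
  by_cases hab : w18 l a - w18 l b = -1
  · by_cases hb : -1 ≤ w18 l b
    · exact key hab hb
    · obtain ⟨_, _⟩ := w18_mem_Icc a
      rw [Matrix.zero_apply, ← neg_eq_zero, ← mem_G18_iff.1 hX.1]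
      exact key (by rw [w18_rev hl, w18_rev hl]; omega) (by rw [w18_rev hl]; omega)
  · exact hX.2 a b hab

lemma eq_zero_of_g18_orthVec_eq_zero (hl : 1 ≤ l) {X : Matrix (Fin (2*l+1)) (Fin (2*l+1)) ℝ}
    (hX : X ∈ Gk18 l (-1)) (hpos : ∀ d, g18 l X (orthVec l (-1) d) = 0)
    (hneg : ∀ d, g18 l X (orthVec l 1 d) = 0) : X = 0 := by
  have h := fun d => And.intro (hpos d) (hneg d)
  simp only [g18_orthVec] at h
  exact eq_zero_of_mem_Gk18_neg_one_of_coords hl hX (fun d => by linarith [h d]) (fun d => by linarith [h d])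

theorem g18_nondegenerate (hl : 1 ≤ l) {X : Matrix (Fin (2*l+1)) (Fin (2*l+1)) ℝ}
    (hX : X ∈ Gk18 l (-1)) (h : ∀ Y ∈ Gk18 l (-1), g18 l X Y = 0) : X = 0 :=
  eq_zero_of_g18_orthVec_eq_zero hl hX (fun d => h _ (orthVec_mem hl _ d))
    (fun d => h _ (orthVec_mem hl _ d))

open Submodule in
lemma Gk18_neg_one_eq_sup (hl : 1 ≤ l) :
    Gk18 l (-1) = span ℝ (Set.range (orthVec l (-1))) ⊔ span ℝ (Set.range (orthVec l 1)) := by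
  refine le_antisymm (fun X hX => ?_) (sup_le ?_ ?_)
  · -- `X` minus its `g`-orthogonal projection onto the `orthVec` is `g`-orthogonal to them
    have hX' : X = ∑ c, gForm l X (orthVec l (-1) c) • orthVec l (-1) c
        - ∑ c, gForm l X (orthVec l 1 c) • orthVec l 1 c := by
      rw [← sub_eq_zero]
      refine eq_zero_of_g18_orthVec_eq_zero hl (sub_mem hX (sub_mem (sum_mem fun c _ =>
        smul_mem _ _ (orthVec_mem hl _ c)) (sum_mem fun c _ => smul_mem _ _ (orthVec_mem hl _ c))))
        (fun d => ?_) (fun d => ?_)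
      all_goals
        rw [← gForm_apply]
        simp [gForm_orthVec_orthVec]
    rw [hX']
    exact sub_mem (mem_sup_left (sum_mem fun c _ => smul_mem _ _ (subset_span ⟨c, rfl⟩)))
      (mem_sup_right (sum_mem fun c _ => smul_mem _ _ (subset_span ⟨c, rfl⟩)))
  all_goals exact span_le.2 (Set.range_subset_iff.2 fun c => orthVec_mem hl _ c)

open Submodule in
theorem exists_g18_signature (hl : 1 ≤ l) :
    ∃ P N : Submodule ℝ (Matrix (Fin (2*l+1)) (Fin (2*l+1)) ℝ),
      P ⊓ N = ⊥ ∧ P ⊔ N = Gk18 l (-1) ∧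
      Module.finrank ℝ ↥P = l - 1 ∧ Module.finrank ℝ ↥N = l - 1 ∧
      (∀ X ∈ P, ∀ Y ∈ N, g18 l X Y = 0) ∧
      (∀ X ∈ P, X ≠ 0 → 0 < g18 l X X) ∧
      (∀ X ∈ N, X ≠ 0 → g18 l X X < 0) := by
  have hPP (c d) : gForm l (orthVec l (-1) c) (orthVec l (-1) d) = if c = d then 1 else 0 := by
    rw [gForm_orthVec_orthVec]
    norm_num
  have hNN (c d) : (-gForm l) (orthVec l 1 c) (orthVec l 1 d) = if c = d then 1 else 0 := by
    rw [LinearMap.neg_apply, LinearMap.neg_apply, gForm_orthVec_orthVec]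
    split_ifs <;> norm_num
  have hPN (c d) : gForm l (orthVec l (-1) c) (orthVec l 1 d) = if c = d then 0 else 0 := by
    rw [gForm_orthVec_orthVec]
    norm_num
  have hpos (X) (hX : X ∈ span ℝ (Set.range (orthVec l (-1)))) (hX0 : X ≠ 0) : 0 < g18 l X X :=
    (gForm l).apply_self_pos_of_mem_span hPP hX hX0
  have hneg (X) (hX : X ∈ span ℝ (Set.range (orthVec l 1))) (hX0 : X ≠ 0) : g18 l X X < 0 :=
    neg_pos.1 ((-gForm l).apply_self_pos_of_mem_span hNN hX hX0)
  refine ⟨_, _, eq_bot_iff.2 fun X ⟨hXP, hXN⟩ => (mem_bot ℝ).2 (by_contra fun hX0 =>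
      ((hpos X hXP hX0).trans (hneg X hXN hX0)).false), (Gk18_neg_one_eq_sup hl).symm,
    ?_, ?_, fun X hX Y hY => ?_, hpos, hneg⟩
  · rw [finrank_span_eq_card (LinearMap.BilinForm.linearIndependent_of_orthonormal hPP),
      Fintype.card_fin]
  · rw [finrank_span_eq_card (LinearMap.BilinForm.linearIndependent_of_orthonormal hNN),
      Fintype.card_fin]
  · obtain ⟨f, rfl⟩ := (mem_span_range_iff_exists_fun ℝ).1 hX
    obtain ⟨g, rfl⟩ := (mem_span_range_iff_exists_fun ℝ).1 hY
    rw [← gForm_apply, (gForm l).sum_smul_sum_smul_of_orthogonal hPN, zero_mul]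

end Form

section Conformal

variable {l : ℕ}

lemma g18_eq_of_mem (hl : 1 ≤ l) {X Y : Matrix (Fin (2*l+1)) (Fin (2*l+1)) ℝ}
    (hX : X ∈ Gk18 l (-1)) (hY : Y ∈ Gk18 l (-1)) :
    g18 l X Y = -(1/2) * (X * Y + Y * X) (mid l) 0 := by
  rw [g18_def, Matrix.add_apply, mul_apply, mul_apply, ← Finset.sum_add_distrib]
  congr 1
  refine Finset.sum_congr rfl fun b _ => ?_
  split_ifs with hb
  · rfl
  · have hb' : w18 l (mid l) - w18 l b ≠ -1 := fun h =>
      hb (w18_eq_neg_one_iff.1 (by rw [w18_mid hl] at h; omega))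
    rw [hX.2 _ _ hb', hY.2 _ _ hb', zero_mul, zero_mul, add_zero]

lemma Gk18_zero_apply_mid (hl : 1 ≤ l) {A : Matrix (Fin (2*l+1)) (Fin (2*l+1)) ℝ}
    (hA : A ∈ Gk18 l 0) (d : Fin (2*l+1)) : A (mid l) d = 0 := by
  by_cases hd : d = mid l
  · have h := (mem_G18_iff.1 hA.1).apply_antidiag_eq_zero Fin.rev_involutive (mid l)
    rw [rev_mid] at h
    rwa [hd]
  · exact hA.2 _ _ fun h => hd ((w18_eq_neg_two_iff hl).1 (by rw [w18_mid hl] at h; omega))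

lemma Gk18_zero_apply_zero {A : Matrix (Fin (2*l+1)) (Fin (2*l+1)) ℝ}
    (hA : A ∈ Gk18 l 0) {d : Fin (2*l+1)} (hd : d ≠ 0) : A d 0 = 0 :=
  hA.2 _ _ fun h => hd (w18_eq_zero_iff.1 (by rwa [w18_zero, sub_zero] at h))

lemma lie_apply_mid_zero (hl : 1 ≤ l) {A : Matrix (Fin (2*l+1)) (Fin (2*l+1)) ℝ}
    (hA : A ∈ Gk18 l 0) (M : Matrix (Fin (2*l+1)) (Fin (2*l+1)) ℝ) :
    ⁅A, M⁆ (mid l) 0 = -(A 0 0 * M (mid l) 0) := by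
  rw [Ring.lie_def, Matrix.sub_apply, mul_apply, mul_apply,
    Finset.sum_eq_zero fun d _ => by rw [Gk18_zero_apply_mid hl hA, zero_mul],
    Finset.sum_eq_single 0 (fun d _ hd => by rw [Gk18_zero_apply_zero hA hd, mul_zero])
      (fun h => absurd (Finset.mem_univ _) h)]
  ring

theorem g18_lie_add_g18_lie (hl : 1 ≤ l) {A X Y : Matrix (Fin (2*l+1)) (Fin (2*l+1)) ℝ}
    (hA : A ∈ Gk18 l 0) (hX : X ∈ Gk18 l (-1)) (hY : Y ∈ Gk18 l (-1)) :
    g18 l ⁅A, X⁆ Y + g18 l X ⁅A, Y⁆ = -A 0 0 * g18 l X Y := by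
  have hAX : ⁅A, X⁆ ∈ Gk18 l (-1) := by simpa using lie_mem_Gk18 hA hX
  have hAY : ⁅A, Y⁆ ∈ Gk18 l (-1) := by simpa using lie_mem_Gk18 hA hY
  have hlie : ⁅A, X⁆ * Y + Y * ⁅A, X⁆ + (X * ⁅A, Y⁆ + ⁅A, Y⁆ * X) = ⁅A, X * Y + Y * X⁆ := by
    simp only [Ring.lie_def]
    noncomm_ring
  rw [g18_eq_of_mem hl hAX hY, g18_eq_of_mem hl hX hAY, g18_eq_of_mem hl hX hY, ← mul_add,
    ← Matrix.add_apply, hlie, lie_apply_mid_zero hl hA]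
  ring

end Conformal

/-- The gradation of `𝔤 = 𝔰𝔬(l+1, l)` defined by the weights above:
it is a GLA with `𝔤_k = 0` for `|k| > 3` whose negative part is an FGLA of the third kind,
the form `g(X,Y) = -(1/2)(X₃₂Y₂₁ + Y₃₂X₂₁)` is a nondegenerate symmetric bilinear form of
neutral signature `(l-1, l-1)` on `𝔤₋₁`, and `𝔤₀` acts conformally on `𝔤₋₁` with conformal
factor `-A₁₁`. -/
theorem so_l1_l_grading (l : ℕ) (hl : 2 ≤ l) :
    -- (1) internal direct sum, bracket compatibility, vanishing for `|k| > 3`: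
    DirectSum.IsInternal (fun k : ℤ => (Gk18 l k).comap (G18 l).subtype) ∧
    (∀ j k : ℤ, ∀ X ∈ Gk18 l j, ∀ Y ∈ Gk18 l k, ⁅X, Y⁆ ∈ Gk18 l (j + k)) ∧
    (∀ k : ℤ, 3 < |k| → Gk18 l k = ⊥) ∧
    -- (2) the negative part is an FGLA of the third kind:
    Gk18 l (-3) ≠ ⊥ ∧
    (∀ p : ℤ, p < 0 → (Gk18 l p : Set (Matrix (Fin (2*l+1)) (Fin (2*l+1)) ℝ)) ⊆
      ↑(LieSubalgebra.lieSpan ℝ (Matrix (Fin (2*l+1)) (Fin (2*l+1)) ℝ) ↑(Gk18 l (-1)))) ∧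
    -- (3) `g18` is a nondegenerate symmetric bilinear form on `𝔤₋₁` of neutral signature
    -- `(l-1, l-1)`:
    (∀ X Y Z, g18 l (X + Y) Z = g18 l X Z + g18 l Y Z) ∧
    (∀ (c : ℝ) X Y, g18 l (c • X) Y = c * g18 l X Y) ∧
    (∀ X Y, g18 l X Y = g18 l Y X) ∧
    (∀ X ∈ Gk18 l (-1), (∀ Y ∈ Gk18 l (-1), g18 l X Y = 0) → X = 0) ∧
    (∃ P N : Submodule ℝ (Matrix (Fin (2*l+1)) (Fin (2*l+1)) ℝ),
      P ⊓ N = ⊥ ∧ P ⊔ N = Gk18 l (-1) ∧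
      Module.finrank ℝ ↥P = l - 1 ∧ Module.finrank ℝ ↥N = l - 1 ∧
      (∀ X ∈ P, ∀ Y ∈ N, g18 l X Y = 0) ∧
      (∀ X ∈ P, X ≠ 0 → 0 < g18 l X X) ∧
      (∀ X ∈ N, X ≠ 0 → g18 l X X < 0)) ∧
    -- (4) `𝔤₀` acts conformally on `(𝔤₋₁, g)` with factor `-A₁₁`:
    (∀ A ∈ Gk18 l 0, ∀ X ∈ Gk18 l (-1), ∀ Y ∈ Gk18 l (-1),
      g18 l ⁅A, X⁆ Y + g18 l X ⁅A, Y⁆ =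
        -(A ⟨0, by omega⟩ ⟨0, by omega⟩) * g18 l X Y) := by
  have hl1 : 1 ≤ l := by omega
  exact ⟨isInternal_Gk18 hl1, fun _ _ _ hX _ hY => lie_mem_Gk18 hX hY, fun _ => Gk18_eq_bot,
    Gk18_neg_three_ne_bot hl, fun _ => Gk18_subset_negOneSpan hl, g18_add_left, g18_smul_left,
    g18_comm, fun _ => g18_nondegenerate hl1, exists_g18_signature hl1,
    fun _ hA _ hX _ hY => g18_lie_add_g18_lie hl1 hA hX hY⟩

end
end
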